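/- arXiv:2207.09876 — 8 statements merged into one kernel-verified Lean document; each statement's English description precedes it below -/
import Mathlib

section
/- Let n ≥ 1, let a : Fin n → Fin n → ℝ be nonnegative, a₀ : Fin n → ℝ nonnegative, π : Fin n → ℝ positive, and for u ∈ (0,∞)ⁿ define the matrices H(u)_{ij} = δ_{ij} π_i / u_i² and A(u)_{ij} = δ_{ij} a₀_i + δ_{ij} ∑_k a_{ik} u_k + a_{ij} u_i. Then for every z ∈ ℝⁿ and u with all components positive, zᵀ H(u) A(u) z ≥ ∑_i π_i a₀_i z_i²/u_i² + (1/4) ∑_i (8 π_i a_{ii} − ∑_{j≠i} π_j a_{ji}) z_i²/u_i. -/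
open Matrix Finset

theorem stmt0 (n : ℕ) (hn : 1 ≤ n)
    (a : Fin n → Fin n → ℝ) (ha : ∀ i j, 0 ≤ a i j)
    (a0 : Fin n → ℝ) (ha0 : ∀ i, 0 ≤ a0 i)
    (π : Fin n → ℝ) (hπ : ∀ i, 0 < π i)
    (u z : Fin n → ℝ) (hu : ∀ i, 0 < u i)
    (H A : Matrix (Fin n) (Fin n) ℝ)
    (hH : ∀ i j, H i j = if i = j then π i / (u i) ^ 2 else 0)
    (hA : ∀ i j, A i j = (if i = j then a0 i else 0)
      + (if i = j then ∑ k, a i k * u k else 0) + a i j * u i) :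
    z ⬝ᵥ (H * A).mulVec z ≥
      ∑ i, π i * a0 i * (z i) ^ 2 / (u i) ^ 2
      + (1 / 4) * ∑ i, (8 * π i * a i i - ∑ j ∈ univ.erase i, π j * a j i)
          * (z i) ^ 2 / u i := by
  classical
  have hune : ∀ i, u i ≠ 0 := fun i => (hu i).ne'
  set P2 : Fin n → Fin n → ℝ := fun i j => π i * a i j * u j * (z i ^ 2 / u i ^ 2) with hP2
  set P3 : Fin n → Fin n → ℝ := fun i j => π i * a i j * (z i * z j) / u i with hP3
  -- multiplication with the diagonal matrix H
  have hHA : ∀ i j, (H * A) i j = π i / u i ^ 2 * A i j := by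
    intro i j
    simp [Matrix.mul_apply, hH, ite_mul, Finset.sum_ite_eq]
  -- expand the quadratic form
  have expand : ∀ i, z i * ∑ j, (π i / u i ^ 2 * A i j) * z j
      = π i * a0 i * z i ^ 2 / u i ^ 2
        + ((∑ j, P2 i j) + (∑ j, P3 i j)) := by
    intro i
    rw [Finset.mul_sum]
    have hterm : ∀ j : Fin n, z i * ((π i / u i ^ 2 * A i j) * z j)
        = (if i = j then π i * a0 i * z i ^ 2 / u i ^ 2
            + π i / u i ^ 2 * ((∑ k, a i k * u k) * z i ^ 2) else 0)
          + P3 i j := by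
      intro j
      rw [hA i j, hP3]
      by_cases h : i = j
      · subst h
        simp only [eq_self_iff_true, if_true]
        field_simp [hune i]
      · simp only [if_neg h, add_zero, zero_add, zero_mul, zero_add]
        field_simp [hune i]
    rw [Finset.sum_congr rfl fun j _ => hterm j, Finset.sum_add_distrib,
      Finset.sum_ite_eq univ i, if_pos (Finset.mem_univ i)]
    have h2 : π i / u i ^ 2 * ((∑ k, a i k * u k) * z i ^ 2) = ∑ j, P2 i j := by
      rw [Finset.sum_mul, Finset.mul_sum]
      refine Finset.sum_congr rfl fun j _ => ?_
      rw [hP2]; ring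
    rw [h2, add_assoc]
  have hLHS : z ⬝ᵥ (H * A).mulVec z
      = (∑ i, π i * a0 i * z i ^ 2 / u i ^ 2)
        + ((∑ i, ∑ j, P2 i j) + (∑ i, ∑ j, P3 i j)) := by
    have h1 : z ⬝ᵥ (H * A).mulVec z
        = ∑ i, z i * ∑ j, (π i / u i ^ 2 * A i j) * z j := by
      simp [dotProduct, Matrix.mulVec, hHA]
    rw [h1, Finset.sum_congr rfl fun i _ => expand i, Finset.sum_add_distrib,
      Finset.sum_add_distrib]
  -- split double sums into diagonal and off-diagonal parts
  have hsplit : ∀ (f : Fin n → Fin n → ℝ),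
      (∑ i, ∑ j, f i j) = (∑ i, f i i) + ∑ i, ∑ j ∈ univ.erase i, f i j := by
    intro f
    rw [← Finset.sum_add_distrib]
    exact Finset.sum_congr rfl fun i _ =>
      (Finset.add_sum_erase univ (f i) (Finset.mem_univ i)).symm
  -- swap indices in an off-diagonal double sum
  have hswap : ∀ (f : Fin n → Fin n → ℝ),
      (∑ i, ∑ j ∈ univ.erase i, f i j) = ∑ i, ∑ j ∈ univ.erase i, f j i := by
    intro f
    have he : ∀ i : Fin n, (univ : Finset (Fin n)).erase i
        = univ.filter (fun j => j ≠ i) := fun i => (Finset.filter_ne' univ i).symm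
    simp_rw [he, Finset.sum_filter]
    rw [Finset.sum_comm]
    refine Finset.sum_congr rfl fun i _ => Finset.sum_congr rfl fun j _ => ?_
    by_cases hij : i = j <;> simp [hij, eq_comm]
  -- Young's inequality on off-diagonal terms
  have hyoung : ∀ i, ∀ j ∈ univ.erase i,
      -(π i * a i j * z j ^ 2 / (4 * u j)) ≤ P2 i j + P3 i j := by
    intro i j _
    have key : P2 i j + P3 i j + π i * a i j * z j ^ 2 / (4 * u j)
        = π i * a i j / u j * (u j * z i / u i + z j / 2) ^ 2 := by
      rw [hP2, hP3]
      field_simp [hune i, hune j]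
      ring
    have hpos : 0 ≤ π i * a i j / u j * (u j * z i / u i + z j / 2) ^ 2 := by
      apply mul_nonneg (div_nonneg (mul_nonneg (hπ i).le (ha i j)) (hu j).le)
      exact sq_nonneg _
    linarith [key ▸ hpos]
  have hoff : (∑ i, ∑ j ∈ univ.erase i, (-(π i * a i j * z j ^ 2 / (4 * u j))))
      ≤ ∑ i, ∑ j ∈ univ.erase i, (P2 i j + P3 i j) :=
    Finset.sum_le_sum fun i _ => Finset.sum_le_sum fun j hj => hyoung i j hj
  -- rewrite the RHS
  have hRHS : (1 / 4) * ∑ i, (8 * π i * a i i - ∑ j ∈ univ.erase i, π j * a j i)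
          * (z i) ^ 2 / u i
      = (∑ i, (P2 i i + P3 i i))
        + ∑ i, ∑ j ∈ univ.erase i, (-(π j * a j i * z i ^ 2 / (4 * u i))) := by
    rw [Finset.mul_sum, ← Finset.sum_add_distrib]
    refine Finset.sum_congr rfl fun i _ => ?_
    have h3 : ∑ j ∈ univ.erase i, (-(π j * a j i * z i ^ 2 / (4 * u i)))
        = -(1 / 4 * ((∑ j ∈ univ.erase i, π j * a j i) * z i ^ 2 / u i)) := by
      rw [Finset.sum_mul, Finset.sum_div, Finset.mul_sum, ← Finset.sum_neg_distrib]
      exact Finset.sum_congr rfl fun j _ => by ring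
    rw [h3, hP2, hP3, sub_mul, sub_div, mul_sub]
    field_simp [hune i]
    ring
  -- swap indices in the RHS off-diagonal sum
  have hswapped : (∑ i, ∑ j ∈ univ.erase i, (-(π j * a j i * z i ^ 2 / (4 * u i))))
      = ∑ i, ∑ j ∈ univ.erase i, (-(π i * a i j * z j ^ 2 / (4 * u j))) :=
    hswap _
  rw [hLHS, hsplit P2, hsplit P3, hRHS, hswapped]
  have hPP : (∑ i, ∑ j ∈ univ.erase i, P2 i j) + (∑ i, ∑ j ∈ univ.erase i, P3 i j)
      = ∑ i, ∑ j ∈ univ.erase i, (P2 i j + P3 i j) := by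
    rw [← Finset.sum_add_distrib]
    exact Finset.sum_congr rfl fun i _ => (Finset.sum_add_distrib).symm
  have hdiag : (∑ i, P2 i i) + (∑ i, P3 i i) = ∑ i, (P2 i i + P3 i i) :=
    (Finset.sum_add_distrib).symm
  linarith [hoff, hPP, hdiag]
end

section
/- Under the hypotheses of the previous setting, let ε > 0, let μ : Fin n → ℝ satisfy μ_i ≥ (1/2) ∑_{j≠i} (a_{ij} + a_{ji}) for all i, and define H⁰(u)_{ij} = δ_{ij}/u_i, A⁰(u)_{ij} = δ_{ij} (μ_i/π_i) u_i², H_ε(u) = H(u) + ε H⁰(u), A_ε(u) = A(u) + ε A⁰(u). Then for every z ∈ ℝⁿ and every u with all components positive, zᵀ H_ε(u) A_ε(u) z ≥ zᵀ H(u) A(u) z + 2ε ∑_i a_{ii} z_i² + ε² ∑_i (μ_i/π_i) u_i z_i². -/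
open Matrix Finset

theorem stmt1 (n : ℕ) (hn : 1 ≤ n)
    (a : Fin n → Fin n → ℝ) (ha : ∀ i j, 0 ≤ a i j)
    (a0 : Fin n → ℝ) (ha0 : ∀ i, 0 ≤ a0 i)
    (π : Fin n → ℝ) (hπ : ∀ i, 0 < π i)
    (ε : ℝ) (hε : 0 < ε)
    (μ : Fin n → ℝ) (hμ : ∀ i, (1 / 2) * ∑ j ∈ univ.erase i, (a i j + a j i) ≤ μ i)
    (u z : Fin n → ℝ) (hu : ∀ i, 0 < u i)
    (H A H0 A0 : Matrix (Fin n) (Fin n) ℝ)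
    (hH : ∀ i j, H i j = if i = j then π i / (u i) ^ 2 else 0)
    (hA : ∀ i j, A i j = (if i = j then a0 i else 0)
      + (if i = j then ∑ k, a i k * u k else 0) + a i j * u i)
    (hH0 : ∀ i j, H0 i j = if i = j then 1 / u i else 0)
    (hA0 : ∀ i j, A0 i j = if i = j then (μ i / π i) * (u i) ^ 2 else 0) :
    z ⬝ᵥ ((H + ε • H0) * (A + ε • A0)).mulVec z ≥
      z ⬝ᵥ (H * A).mulVec z + 2 * ε * ∑ i, a i i * (z i) ^ 2
      + ε ^ 2 * ∑ i, (μ i / π i) * u i * (z i) ^ 2 := by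
  -- expansion of the product
  have hexp : z ⬝ᵥ ((H + ε • H0) * (A + ε • A0)).mulVec z =
      z ⬝ᵥ (H * A).mulVec z + ε * (z ⬝ᵥ (H * A0).mulVec z) + ε * (z ⬝ᵥ (H0 * A).mulVec z)
      + ε ^ 2 * (z ⬝ᵥ (H0 * A0).mulVec z) := by
    simp only [Matrix.add_mul, Matrix.mul_add, Matrix.smul_mul, Matrix.mul_smul, smul_smul,
      Matrix.add_mulVec, Matrix.smul_mulVec, dotProduct_add, dotProduct_smul, smul_eq_mul]
    ring
  -- H * A0 quadratic form
  have hQ1 : z ⬝ᵥ (H * A0).mulVec z = ∑ i, μ i * z i ^ 2 := by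
    have : H * A0 = Matrix.diagonal μ := by
      ext i j
      simp only [Matrix.mul_apply, hH, hA0, Matrix.diagonal_apply]
      rw [Finset.sum_eq_single i]
      · by_cases h : i = j
        · subst h
          have h1 : π i ≠ 0 := (hπ i).ne'
          have h2 : u i ≠ 0 := (hu i).ne'
          have h1 : π i ≠ 0 := (hπ i).ne'
          simp
          field_simp
        · simp [h]
      · intro b _ hb; simp [Ne.symm hb]
      · simp
    rw [this]
    simp only [dotProduct, mulVec_diagonal]
    exact Finset.sum_congr rfl fun i _ => by ring
  -- H0 * A0 quadratic form
  have hQ3 : z ⬝ᵥ (H0 * A0).mulVec z = ∑ i, (μ i / π i) * u i * z i ^ 2 := by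
    have : H0 * A0 = Matrix.diagonal (fun i => (μ i / π i) * u i) := by
      ext i j
      simp only [Matrix.mul_apply, hH0, hA0, Matrix.diagonal_apply]
      rw [Finset.sum_eq_single i]
      · by_cases h : i = j
        · subst h
          have h2 : u i ≠ 0 := (hu i).ne'
          have h1 : π i ≠ 0 := (hπ i).ne'
          simp
          field_simp
        · simp [h]
      · intro b _ hb; simp [Ne.symm hb]
      · simp
    rw [this]
    simp only [dotProduct, mulVec_diagonal]
    exact Finset.sum_congr rfl fun i _ => by ring
  -- H0 * A quadratic form
  have hQ2 : z ⬝ᵥ (H0 * A).mulVec z =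
      ∑ i, (a0 i + ∑ k, a i k * u k) / u i * z i ^ 2 + ∑ i, ∑ j, a i j * (z i * z j) := by
    have hmul : ∀ i j, (H0 * A) i j = (1 / u i) * A i j := by
      intro i j
      simp only [Matrix.mul_apply, hH0]
      rw [Finset.sum_eq_single i]
      · simp
      · intro b _ hb; simp [Ne.symm hb]
      · simp
    simp only [dotProduct, mulVec, dotProduct, hmul, hA]
    rw [← Finset.sum_add_distrib]
    refine Finset.sum_congr rfl fun i _ => ?_
    have hstep : ∀ j, z i * ((1 / u i) * (((if i = j then a0 i else 0)
        + if i = j then ∑ k, a i k * u k else 0) + a i j * u i) * z j)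
        = (if i = j then (a0 i + ∑ k, a i k * u k) / u i * z i ^ 2 else 0)
          + a i j * (z i * z j) := by
      intro j
      have h2 : u i ≠ 0 := (hu i).ne'
      by_cases h : i = j
      · subst h; simp only [if_pos rfl, if_true]; field_simp
      · simp only [if_neg h]; field_simp; ring
    rw [Finset.mul_sum, Finset.sum_congr rfl fun j _ => hstep j, Finset.sum_add_distrib,
      Finset.sum_ite_eq univ i, if_pos (Finset.mem_univ i)]
  rw [hexp, hQ1, hQ2, hQ3]
  -- key inequality
  have key : (∑ i, μ i * z i ^ 2) +
      ((∑ i, (a0 i + ∑ k, a i k * u k) / u i * z i ^ 2) + ∑ i, ∑ j, a i j * (z i * z j))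
      ≥ 2 * ∑ i, a i i * z i ^ 2 := by
    -- diagonal extraction from the double sum
    have hsplit : ∑ i, ∑ j, a i j * (z i * z j)
        = (∑ i, a i i * z i ^ 2) + ∑ i, ∑ j ∈ univ.erase i, a i j * (z i * z j) := by
      rw [← Finset.sum_add_distrib]
      refine Finset.sum_congr rfl fun i _ => ?_
      rw [← Finset.add_sum_erase univ _ (Finset.mem_univ i)]
      congr 1
      ring
    -- diagonal bound from the positive sum
    have hdiag : ∀ i, a i i * z i ^ 2 ≤ (a0 i + ∑ k, a i k * u k) / u i * z i ^ 2 := by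
      intro i
      refine mul_le_mul_of_nonneg_right ?_ (sq_nonneg _)
      rw [le_div_iff₀ (hu i)]
      have h1 : a i i * u i ≤ ∑ k, a i k * u k :=
        Finset.single_le_sum (fun k _ => mul_nonneg (ha i k) (hu k).le) (Finset.mem_univ i)
      have := ha0 i
      linarith
    have hA0sum : ∑ i, a i i * z i ^ 2 ≤ ∑ i, (a0 i + ∑ k, a i k * u k) / u i * z i ^ 2 :=
      Finset.sum_le_sum fun i _ => hdiag i
    -- μ bound
    have hμsum : ∑ i, ((1 / 2) * ∑ j ∈ univ.erase i, (a i j + a j i)) * z i ^ 2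
        ≤ ∑ i, μ i * z i ^ 2 :=
      Finset.sum_le_sum fun i _ => mul_le_mul_of_nonneg_right (hμ i) (sq_nonneg _)
    -- off-diagonal sum nonnegativity
    set g : Fin n → Fin n → ℝ :=
      fun i j => (1 / 2) * (a i j + a j i) * z i ^ 2 + a i j * (z i * z j) with hg
    have hTnn : 0 ≤ ∑ i, ∑ j ∈ univ.erase i, g i j := by
      have hswap : ∑ i, ∑ j ∈ univ.erase i, g i j = ∑ i, ∑ j ∈ univ.erase i, g j i := by
        refine Finset.sum_comm' (s' := fun j => univ.erase j) (t' := univ) fun x y => ?_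
        simp only [Finset.mem_univ, Finset.mem_erase, true_and, and_true]
        exact ne_comm
      have h2T : (0:ℝ) ≤ ∑ i, ∑ j ∈ univ.erase i, (g i j + g j i) := by
        refine Finset.sum_nonneg fun i _ => Finset.sum_nonneg fun j _ => ?_
        have : g i j + g j i = (1 / 2) * (a i j + a j i) * (z i + z j) ^ 2 := by
          simp only [hg]; ring
        rw [this]
        exact mul_nonneg (mul_nonneg (by norm_num)
          (by linarith [ha i j, ha j i])) (sq_nonneg _)
      rw [Finset.sum_congr rfl fun i _ => Finset.sum_add_distrib, Finset.sum_add_distrib,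
        ← hswap] at h2T
      linarith
    have hexp2 : ∑ i, ((1 / 2) * ∑ j ∈ univ.erase i, (a i j + a j i)) * z i ^ 2
        + ∑ i, ∑ j ∈ univ.erase i, a i j * (z i * z j) = ∑ i, ∑ j ∈ univ.erase i, g i j := by
      rw [← Finset.sum_add_distrib]
      refine Finset.sum_congr rfl fun i _ => ?_
      simp only [hg]
      have h1 : ((1:ℝ) / 2 * ∑ j ∈ univ.erase i, (a i j + a j i)) * z i ^ 2
          = ∑ j ∈ univ.erase i, (1 / 2) * (a i j + a j i) * z i ^ 2 := by
        rw [Finset.mul_sum, Finset.sum_mul]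
      rw [h1, ← Finset.sum_add_distrib]
    linarith
  have h1 : ε * ((∑ i, (a0 i + ∑ k, a i k * u k) / u i * z i ^ 2) + ∑ i, ∑ j, a i j * (z i * z j))
      + ε * ∑ i, μ i * z i ^ 2 ≥ ε * (2 * ∑ i, a i i * z i ^ 2) := by
    rw [← mul_add]
    exact mul_le_mul_of_nonneg_left (by linarith [key]) hε.le
  linarith
end

section
/- For n = 3 with coefficients a_{13} = a_{21} = a_{32} = 1 and a_{12} = a_{23} = a_{31} = 0: if a_{11}a_{22}a_{33} > 1/512, then with π₁ = 1, π₂ = (1/2)(8a_{11} + 1/(64 a_{22}a_{33})), π₃ = (1/2)(8π₂a_{22} + 1/(8a_{33})), all three of the inequalities 8π₁a_{11} > π₂, 8π₂a_{22} > π₃, 8π₃a_{33} > π₁ hold. -/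
theorem stmt3 (a11 a22 a33 : ℝ) (h11 : 0 < a11) (h22 : 0 < a22) (h33 : 0 < a33)
    (h : a11 * a22 * a33 > 1 / 512)
    (π1 π2 π3 : ℝ)
    (hπ1 : π1 = 1)
    (hπ2 : π2 = (1 / 2) * (8 * a11 + 1 / (64 * a22 * a33)))
    (hπ3 : π3 = (1 / 2) * (8 * π2 * a22 + 1 / (8 * a33))) :
    8 * π1 * a11 > π2 ∧ 8 * π2 * a22 > π3 ∧ 8 * π3 * a33 > π1 := by
  set u : ℝ := 1 / (64 * a22 * a33) with hu_def
  set v : ℝ := 1 / (8 * a33) with hv_def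
  have hu : u * (a22 * a33) = 1 / 64 := by rw [hu_def]; field_simp
  have hv : v * a33 = 1 / 8 := by rw [hv_def]; field_simp
  have huv : v = 8 * (u * a22) := by rw [hu_def, hv_def]; field_simp; ring
  have key : 512 * (a11 * a22 * a33) > 1 := by linarith
  have hupos : 0 < u := by rw [hu_def]; positivity
  have h1 : u < 8 * a11 := by nlinarith [mul_pos h22 h33]
  refine ⟨?_, ?_, ?_⟩
  · rw [hπ2, hπ1]; linarith
  · rw [hπ3, hπ2]; nlinarith [mul_pos h11 h22]
  · rw [hπ1, hπ3, hπ2]; nlinarith [key, hu, hv]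
end

section
/- Let n ≥ 1, a : Fin n → Fin n → ℝ nonnegative, a₀ : Fin n → ℝ nonnegative, π : Fin n → ℝ positive, μ : Fin n → ℝ with μ_i ≥ (1/2)∑_{j≠i}(a_{ij} + a_{ji}), and set κ = min_i (8π_i a_{ii} − ∑_{j≠i} π_j a_{ji}), η₀ = min_i a₀_i / (∑_j a_{ij}(1 + δ_{ij})) (assuming each a₀_i > 0 and each row sum positive). Then there exist constants C₁ = 2 max_i (∑_j a_{ij} + μ_i) and C₂ = 2 max_i (μ_i/π_i) such that for all 0 < η ≤ η₀, all ε > 0, all u ∈ (0,∞)ⁿ, and all z ∈ ℝⁿ: zᵀ H_ε(u+η) A_ε(u) z ≥ (κ/4) ∑_i z_i²/(u_i+η) − η ε C₁ ∑_i z_i²/(u_i+η) − η ε² C₂ ∑_i z_i², where H_ε(v)_{ij} = δ_{ij}(π_i/v_i² + ε/v_i), A_ε(u) = A(u) + ε A⁰(u), A(u)_{ij} = δ_{ij}a₀_i + δ_{ij}∑_k a_{ik}u_k + a_{ij}u_i, A⁰(u)_{ij} = δ_{ij}(μ_i/π_i)u_i², and u+η denotes the vector with components u_i + η. -/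
open Matrix Finset

set_option maxHeartbeats 1000000 in
theorem stmt5 (n : ℕ) (hn : 0 < n)
    (a : Fin n → Fin n → ℝ) (ha : ∀ i j, 0 ≤ a i j)
    (a0 : Fin n → ℝ) (ha0 : ∀ i, 0 < a0 i)
    (hrow : ∀ i : Fin n, 0 < ∑ j, a i j * (1 + if i = j then 1 else 0))
    (π : Fin n → ℝ) (hπ : ∀ i, 0 < π i)
    (μ : Fin n → ℝ) (hμ : ∀ i, (1 / 2) * ∑ j ∈ univ.erase i, (a i j + a j i) ≤ μ i)
    (κ η₀ C₁ C₂ : ℝ)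
    (hne : (univ : Finset (Fin n)).Nonempty)
    (hκ : κ = univ.inf' hne (fun i => 8 * π i * a i i - ∑ j ∈ univ.erase i, π j * a j i))
    (hη₀ : η₀ = univ.inf' hne (fun i => a0 i / ∑ j, a i j * (1 + if i = j then 1 else 0)))
    (hC₁ : C₁ = 2 * univ.sup' hne (fun i => (∑ j, a i j) + μ i))
    (hC₂ : C₂ = 2 * univ.sup' hne (fun i => μ i / π i)) :
    ∀ η : ℝ, 0 < η → η ≤ η₀ → ∀ ε : ℝ, 0 < ε →
    ∀ u z : Fin n → ℝ, (∀ i, 0 < u i) →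
    ∀ Hε Aε : Matrix (Fin n) (Fin n) ℝ,
    (∀ i j, Hε i j = if i = j then π i / (u i + η) ^ 2 + ε / (u i + η) else 0) →
    (∀ i j, Aε i j = (if i = j then a0 i else 0)
      + (if i = j then ∑ k, a i k * u k else 0) + a i j * u i
      + ε * (if i = j then (μ i / π i) * (u i) ^ 2 else 0)) →
    z ⬝ᵥ (Hε * Aε).mulVec z ≥
      (κ / 4) * ∑ i, (z i) ^ 2 / (u i + η)
      - η * ε * C₁ * ∑ i, (z i) ^ 2 / (u i + η)
      - η * ε ^ 2 * C₂ * ∑ i, (z i) ^ 2 := by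
  intro η hη hηle ε hε u z hu Hε Aε hH hA
  have hv : ∀ i, 0 < u i + η := fun i => by have := hu i; linarith
  have hμ0 : ∀ i, 0 ≤ μ i := by
    intro i
    refine le_trans ?_ (hμ i)
    exact mul_nonneg (by norm_num)
      (Finset.sum_nonneg fun j _ => add_nonneg (ha i j) (ha j i))
  have hC₂0 : 0 ≤ C₂ := by
    obtain ⟨i0, _⟩ := id hne
    have h1 : μ i0 / π i0 ≤ univ.sup' hne (fun i => μ i / π i) :=
      Finset.le_sup' (fun i => μ i / π i) (mem_univ i0)
    have h2 : 0 ≤ μ i0 / π i0 := div_nonneg (hμ0 i0) (hπ i0).le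
    rw [hC₂]; linarith
  have hC₁μ : ∀ i, 2 * μ i ≤ C₁ := by
    intro i
    have h1 : (∑ j, a i j) + μ i ≤ univ.sup' hne (fun i => (∑ j, a i j) + μ i) :=
      Finset.le_sup' (fun i => (∑ j, a i j) + μ i) (mem_univ i)
    have h2 : 0 ≤ ∑ j, a i j := Finset.sum_nonneg fun j _ => ha i j
    rw [hC₁]; linarith
  have hκle : ∀ j, κ ≤ 8 * π j * a j j - ∑ i ∈ univ.erase j, π i * a i j := by
    intro j; rw [hκ]; exact Finset.inf'_le _ (mem_univ j)
  have ha0η : ∀ i, η * (∑ j, a i j * (1 + if i = j then 1 else 0)) ≤ a0 i := by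
    intro i
    have h1 : η₀ ≤ a0 i / (∑ j, a i j * (1 + if i = j then 1 else 0)) := by
      rw [hη₀]; exact Finset.inf'_le _ (mem_univ i)
    exact (le_div_iff₀ (hrow i)).mp (le_trans hηle h1)
  have hswap : ∀ f : Fin n → Fin n → ℝ,
      ∑ i, ∑ j ∈ univ.erase i, f i j = ∑ j, ∑ i ∈ univ.erase j, f i j := by
    intro f
    have h1 : ∀ (g : Fin n → Fin n → ℝ) (i : Fin n),
        ∑ j ∈ univ.erase i, g i j = ∑ j, if j = i then 0 else g i j := by
      intro g i
      rw [← Finset.sum_erase (a := i) univ (f := fun j => if j = i then 0 else g i j) (by simp)]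
      exact Finset.sum_congr rfl fun j hj => (if_neg (Finset.ne_of_mem_erase hj)).symm
    calc ∑ i, ∑ j ∈ univ.erase i, f i j
        = ∑ i, ∑ j, if j = i then 0 else f i j :=
          Finset.sum_congr rfl fun i _ => h1 f i
      _ = ∑ j, ∑ i, if j = i then 0 else f i j := Finset.sum_comm
      _ = ∑ j, ∑ i ∈ univ.erase j, f i j := by
          refine Finset.sum_congr rfl fun j _ => ?_
          rw [h1 (fun j i => f i j) j]
          refine Finset.sum_congr rfl fun i _ => ?_
          by_cases hij : j = i
          · rw [if_pos hij, if_pos hij.symm]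
          · rw [if_neg hij, if_neg (fun hh => hij hh.symm)]
  -- expansion of the quadratic form
  have hQ : z ⬝ᵥ (Hε * Aε).mulVec z =
      ∑ i, ((π i / (u i + η) ^ 2 + ε / (u i + η)) * ((a0 i + ε * (μ i / π i * u i ^ 2)) * z i ^ 2)
        + ∑ j, (π i / (u i + η) ^ 2 + ε / (u i + η)) * a i j * (u j * z i ^ 2 + u i * (z i * z j))) := by
    rw [← Matrix.mulVec_mulVec]
    simp only [dotProduct, Matrix.mulVec, hH, hA, ite_mul, zero_mul, add_mul,
      Finset.sum_add_distrib, Finset.sum_ite_eq, mem_univ, if_true, mul_ite, mul_zero]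
    rw [← Finset.sum_add_distrib, ← Finset.sum_add_distrib, ← Finset.sum_add_distrib]
    refine Finset.sum_congr rfl fun x _ => ?_
    have e : ∀ (c : ℝ), ∑ j, c * a x j * (u j * z x ^ 2 + u x * (z x * z j))
        = (∑ j, a x j * u j) * (c * z x ^ 2) + (∑ j, a x j * u x * z j) * (c * z x) := by
      intro c
      rw [Finset.sum_mul, Finset.sum_mul, ← Finset.sum_add_distrib]
      exact Finset.sum_congr rfl fun j _ => by ring
    rw [e, e]
    ring
  -- pointwise bound on the diagonal terms
  have hdiag : ∀ i, (∑ j, (π i / (u i + η) ^ 2 + ε / (u i + η)) * (η * (a i j * (1 + if i = j then 1 else 0))) * z i ^ 2)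
      + (ε * μ i * z i ^ 2 - 2 * η * ε * μ i * (z i ^ 2 / (u i + η)))
      ≤ (π i / (u i + η) ^ 2 + ε / (u i + η)) * ((a0 i + ε * (μ i / π i * u i ^ 2)) * z i ^ 2) := by
    intro i
    have hvi := hv i
    have hπi := hπ i
    have hCnn : 0 ≤ (π i / (u i + η) ^ 2 + ε / (u i + η)) := by positivity
    -- a0 part
    have p1 : ∑ j, (π i / (u i + η) ^ 2 + ε / (u i + η)) * (η * (a i j * (1 + if i = j then 1 else 0))) * z i ^ 2
        = (η * ∑ j, a i j * (1 + if i = j then 1 else 0)) * ((π i / (u i + η) ^ 2 + ε / (u i + η)) * z i ^ 2) := by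
      rw [Finset.mul_sum, Finset.sum_mul]
      exact Finset.sum_congr rfl fun j _ => by ring
    have p2 : (η * ∑ j, a i j * (1 + if i = j then 1 else 0)) * ((π i / (u i + η) ^ 2 + ε / (u i + η)) * z i ^ 2)
        ≤ a0 i * ((π i / (u i + η) ^ 2 + ε / (u i + η)) * z i ^ 2) :=
      mul_le_mul_of_nonneg_right (ha0η i) (by positivity)
    -- μ part
    have p3 : ε * μ i * z i ^ 2 - 2 * η * ε * μ i * (z i ^ 2 / (u i + η))
        ≤ (π i / (u i + η) ^ 2 + ε / (u i + η)) * (ε * (μ i / π i * u i ^ 2)) * z i ^ 2 := by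
      have e1 : (π i / (u i + η) ^ 2 + ε / (u i + η)) * (ε * (μ i / π i * u i ^ 2)) * z i ^ 2
          = ε * μ i * (u i ^ 2 / (u i + η) ^ 2) * z i ^ 2
            + ε ^ 2 * (μ i / π i) * (u i ^ 2 / (u i + η)) * z i ^ 2 := by
        field_simp
      have e2 : ε * μ i * (u i ^ 2 / (u i + η) ^ 2) * z i ^ 2
          - (ε * μ i * z i ^ 2 - 2 * η * ε * μ i * (z i ^ 2 / (u i + η)))
          = (ε * μ i * z i ^ 2) * (η ^ 2 / (u i + η) ^ 2) := by
        field_simp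
        ring
      have h2 : 0 ≤ (ε * μ i * z i ^ 2) * (η ^ 2 / (u i + η) ^ 2) := by
        have := hμ0 i
        positivity
      have h3 : 0 ≤ ε ^ 2 * (μ i / π i) * (u i ^ 2 / (u i + η)) * z i ^ 2 := by
        have := hμ0 i
        positivity
      nlinarith [e1, e2]
    calc (∑ j, (π i / (u i + η) ^ 2 + ε / (u i + η)) * (η * (a i j * (1 + if i = j then 1 else 0))) * z i ^ 2)
          + (ε * μ i * z i ^ 2 - 2 * η * ε * μ i * (z i ^ 2 / (u i + η)))
        ≤ a0 i * ((π i / (u i + η) ^ 2 + ε / (u i + η)) * z i ^ 2)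
          + (π i / (u i + η) ^ 2 + ε / (u i + η)) * (ε * (μ i / π i * u i ^ 2)) * z i ^ 2 := by
          rw [p1]; exact add_le_add p2 p3
      _ = (π i / (u i + η) ^ 2 + ε / (u i + η)) * ((a0 i + ε * (μ i / π i * u i ^ 2)) * z i ^ 2) := by ring
  -- pointwise bound on the cross terms
  have hTB : ∀ i j,
      (if i = j then 2 * (π i / (u i + η)) * a i i * z i ^ 2 else -(π i * a i j / (4 * (u j + η))) * z j ^ 2)
      + (if i = j then 2 * ε * a i i * z i ^ 2 else -(ε * a i j / 2) * (z i ^ 2 + z j ^ 2))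
      ≤ (π i / (u i + η) ^ 2 + ε / (u i + η)) * (η * (a i j * (1 + if i = j then 1 else 0))) * z i ^ 2
        + (π i / (u i + η) ^ 2 + ε / (u i + η)) * a i j * (u j * z i ^ 2 + u i * (z i * z j)) := by
    intro i j
    have hvi := hv i
    have hvj := hv j
    have hπi := hπ i
    have hui := hu i
    by_cases hij : i = j
    · subst hij
      rw [if_pos rfl, if_pos rfl, if_pos rfl]
      have : (π i / (u i + η) ^ 2 + ε / (u i + η)) * (η * (a i i * (1 + 1))) * z i ^ 2
          + (π i / (u i + η) ^ 2 + ε / (u i + η)) * a i i * (u i * z i ^ 2 + u i * (z i * z i))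
          = 2 * (π i / (u i + η)) * a i i * z i ^ 2 + 2 * ε * a i i * z i ^ 2 := by
        field_simp
        ring
      linarith [this]
    · rw [if_neg hij, if_neg hij, if_neg hij]
      have L1 : -(π i * a i j / (4 * (u j + η))) * z j ^ 2
          ≤ π i / (u i + η) ^ 2 * (a i j * ((u j + η) * z i ^ 2 + u i * (z i * z j))) := by
        have hnum : 0 ≤ 4 * (u j + η) * ((u j + η) * z i ^ 2 + u i * (z i * z j)) + (u i + η) ^ 2 * z j ^ 2 := by
          nlinarith [sq_nonneg (2 * (u j + η) * z i + u i * z j),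
            mul_nonneg (mul_nonneg hη.le (by linarith : (0:ℝ) ≤ 2 * u i + η)) (sq_nonneg (z j))]
        have heq : π i / (u i + η) ^ 2 * (a i j * ((u j + η) * z i ^ 2 + u i * (z i * z j)))
            + π i * a i j / (4 * (u j + η)) * z j ^ 2
            = π i * a i j * ((4 * (u j + η) * ((u j + η) * z i ^ 2 + u i * (z i * z j)) + (u i + η) ^ 2 * z j ^ 2)
              / (4 * (u j + η) * (u i + η) ^ 2)) := by
          field_simp
        have hpos : 0 ≤ π i * a i j * ((4 * (u j + η) * ((u j + η) * z i ^ 2 + u i * (z i * z j)) + (u i + η) ^ 2 * z j ^ 2)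
              / (4 * (u j + η) * (u i + η) ^ 2)) :=
          mul_nonneg (mul_nonneg hπi.le (ha i j)) (div_nonneg hnum (by positivity))
        linarith [heq, hpos]
      have L2 : -(ε * a i j / 2) * (z i ^ 2 + z j ^ 2)
          ≤ ε / (u i + η) * (a i j * ((u j + η) * z i ^ 2 + u i * (z i * z j))) := by
        have hnum : 0 ≤ 2 * ((u j + η) * z i ^ 2 + u i * (z i * z j)) + (u i + η) * (z i ^ 2 + z j ^ 2) := by
          nlinarith [mul_nonneg hui.le (sq_nonneg (z i + z j)),
            mul_nonneg hη.le (add_nonneg (sq_nonneg (z i)) (sq_nonneg (z j))),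
            mul_nonneg (hv j).le (sq_nonneg (z i))]
        have heq : ε / (u i + η) * (a i j * ((u j + η) * z i ^ 2 + u i * (z i * z j)))
            + ε * a i j / 2 * (z i ^ 2 + z j ^ 2)
            = ε * a i j * ((2 * ((u j + η) * z i ^ 2 + u i * (z i * z j)) + (u i + η) * (z i ^ 2 + z j ^ 2))
              / (2 * (u i + η))) := by
          field_simp
        have hpos : 0 ≤ ε * a i j * ((2 * ((u j + η) * z i ^ 2 + u i * (z i * z j)) + (u i + η) * (z i ^ 2 + z j ^ 2))
              / (2 * (u i + η))) :=
          mul_nonneg (mul_nonneg hε.le (ha i j)) (div_nonneg hnum (by positivity))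
        linarith [heq, hpos]
      have hsplit : (π i / (u i + η) ^ 2 + ε / (u i + η)) * (η * (a i j * (1 + 0))) * z i ^ 2
          + (π i / (u i + η) ^ 2 + ε / (u i + η)) * a i j * (u j * z i ^ 2 + u i * (z i * z j))
          = π i / (u i + η) ^ 2 * (a i j * ((u j + η) * z i ^ 2 + u i * (z i * z j)))
            + ε / (u i + η) * (a i j * ((u j + η) * z i ^ 2 + u i * (z i * z j))) := by
        ring
      linarith [L1, L2, hsplit]
  -- sum of B1 bound
  have hB1 : ∑ j, κ / 4 * (z j ^ 2 / (u j + η))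
      ≤ ∑ i, ∑ j, (if i = j then 2 * (π i / (u i + η)) * a i i * z i ^ 2
          else -(π i * a i j / (4 * (u j + η))) * z j ^ 2) := by
    rw [Finset.sum_comm]
    apply Finset.sum_le_sum
    intro j _
    rw [← Finset.add_sum_erase univ _ (mem_univ j), if_pos rfl]
    have herase : ∑ i ∈ univ.erase j, (if i = j then 2 * (π i / (u i + η)) * a i i * z i ^ 2
          else -(π i * a i j / (4 * (u j + η))) * z j ^ 2)
        = -((∑ i ∈ univ.erase j, π i * a i j) * (z j ^ 2 / (4 * (u j + η)))) := by
      calc ∑ i ∈ univ.erase j, (if i = j then 2 * (π i / (u i + η)) * a i i * z i ^ 2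
            else -(π i * a i j / (4 * (u j + η))) * z j ^ 2)
          = ∑ i ∈ univ.erase j, -(π i * a i j * (z j ^ 2 / (4 * (u j + η)))) :=
            Finset.sum_congr rfl fun i hi => by
              rw [if_neg (Finset.ne_of_mem_erase hi)]; ring
        _ = -((∑ i ∈ univ.erase j, π i * a i j) * (z j ^ 2 / (4 * (u j + η)))) := by
            rw [Finset.sum_neg_distrib, Finset.sum_mul]
    rw [herase]
    have hvj := hv j
    have h1 : κ * (z j ^ 2 / (4 * (u j + η)))
        ≤ (8 * π j * a j j - ∑ i ∈ univ.erase j, π i * a i j) * (z j ^ 2 / (4 * (u j + η))) :=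
      mul_le_mul_of_nonneg_right (hκle j) (by positivity)
    have h2 : (8 * π j * a j j - ∑ i ∈ univ.erase j, π i * a i j) * (z j ^ 2 / (4 * (u j + η)))
        = 2 * (π j / (u j + η)) * a j j * z j ^ 2
          - (∑ i ∈ univ.erase j, π i * a i j) * (z j ^ 2 / (4 * (u j + η))) := by
      field_simp
      ring
    have h3 : κ / 4 * (z j ^ 2 / (u j + η)) = κ * (z j ^ 2 / (4 * (u j + η))) := by
      rw [div_mul_eq_mul_div, mul_div_assoc]
      congr 1
      rw [div_div]
      ring_nf
    linarith
  -- sum of B23 bound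
  have hB23 : -(ε * ∑ i, μ i * z i ^ 2)
      ≤ ∑ i, ∑ j, (if i = j then 2 * ε * a i i * z i ^ 2
          else -(ε * a i j / 2) * (z i ^ 2 + z j ^ 2)) := by
    have e1 : ∀ i, ∑ j, (if i = j then 2 * ε * a i i * z i ^ 2
          else -(ε * a i j / 2) * (z i ^ 2 + z j ^ 2))
        = 2 * ε * a i i * z i ^ 2 + ∑ j ∈ univ.erase i, -(ε * a i j / 2) * (z i ^ 2 + z j ^ 2) := by
      intro i
      rw [← Finset.add_sum_erase univ _ (mem_univ i), if_pos rfl]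
      congr 1
      exact Finset.sum_congr rfl fun j hj => if_neg (Ne.symm (Finset.ne_of_mem_erase hj))
    have e2 : ∀ i, ∑ j ∈ univ.erase i, -(ε * a i j / 2) * (z i ^ 2 + z j ^ 2)
        = -(∑ j ∈ univ.erase i, ε / 2 * (a i j * z i ^ 2))
          - ∑ j ∈ univ.erase i, ε / 2 * (a i j * z j ^ 2) := by
      intro i
      calc ∑ j ∈ univ.erase i, -(ε * a i j / 2) * (z i ^ 2 + z j ^ 2)
          = ∑ j ∈ univ.erase i, (-(ε / 2 * (a i j * z i ^ 2)) + -(ε / 2 * (a i j * z j ^ 2))) :=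
            Finset.sum_congr rfl fun j _ => by ring
        _ = _ := by
            rw [Finset.sum_add_distrib, Finset.sum_neg_distrib, Finset.sum_neg_distrib]
            ring
    have e3 : ∑ i, ∑ j ∈ univ.erase i, ε / 2 * (a i j * z j ^ 2)
        = ∑ i, ∑ j ∈ univ.erase i, ε / 2 * (a j i * z i ^ 2) := by
      rw [hswap (fun i j => ε / 2 * (a i j * z j ^ 2))]
    have key : ∑ i, ∑ j, (if i = j then 2 * ε * a i i * z i ^ 2
          else -(ε * a i j / 2) * (z i ^ 2 + z j ^ 2))
        = ∑ i, (2 * ε * a i i * z i ^ 2 - (∑ j ∈ univ.erase i, ε / 2 * (a i j * z i ^ 2))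
            - ∑ j ∈ univ.erase i, ε / 2 * (a j i * z i ^ 2)) := by
      calc ∑ i, ∑ j, (if i = j then 2 * ε * a i i * z i ^ 2
            else -(ε * a i j / 2) * (z i ^ 2 + z j ^ 2))
          = ∑ i, ((2 * ε * a i i * z i ^ 2 - ∑ j ∈ univ.erase i, ε / 2 * (a i j * z i ^ 2))
              - ∑ j ∈ univ.erase i, ε / 2 * (a i j * z j ^ 2)) :=
            Finset.sum_congr rfl fun i _ => by rw [e1 i, e2 i]; ring
        _ = (∑ i, (2 * ε * a i i * z i ^ 2 - ∑ j ∈ univ.erase i, ε / 2 * (a i j * z i ^ 2)))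
              - ∑ i, ∑ j ∈ univ.erase i, ε / 2 * (a i j * z j ^ 2) := Finset.sum_sub_distrib _ _
        _ = (∑ i, (2 * ε * a i i * z i ^ 2 - ∑ j ∈ univ.erase i, ε / 2 * (a i j * z i ^ 2)))
              - ∑ i, ∑ j ∈ univ.erase i, ε / 2 * (a j i * z i ^ 2) := by rw [e3]
        _ = _ := by
            rw [← Finset.sum_sub_distrib]
    rw [key]
    have e5 : -(ε * ∑ i, μ i * z i ^ 2) = ∑ i, -(ε * (μ i * z i ^ 2)) := by
      rw [Finset.sum_neg_distrib, Finset.mul_sum]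
    rw [e5]
    apply Finset.sum_le_sum
    intro i _
    have e6 : (∑ j ∈ univ.erase i, ε / 2 * (a i j * z i ^ 2))
        + ∑ j ∈ univ.erase i, ε / 2 * (a j i * z i ^ 2)
        = (1 / 2 * ∑ j ∈ univ.erase i, (a i j + a j i)) * (ε * z i ^ 2) := by
      rw [← Finset.sum_add_distrib, Finset.mul_sum, Finset.sum_mul]
      exact Finset.sum_congr rfl fun j _ => by ring
    have e7 : (1 / 2 * ∑ j ∈ univ.erase i, (a i j + a j i)) * (ε * z i ^ 2)
        ≤ μ i * (ε * z i ^ 2) :=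
      mul_le_mul_of_nonneg_right (hμ i) (by positivity)
    have e8 : 0 ≤ 2 * ε * a i i * z i ^ 2 := by
      have := ha i i
      positivity
    nlinarith [e6, e7, e8]
  -- put everything together
  have step1 : ∑ i, ((∑ j, (π i / (u i + η) ^ 2 + ε / (u i + η)) * (η * (a i j * (1 + if i = j then 1 else 0))) * z i ^ 2)
        + (ε * μ i * z i ^ 2 - 2 * η * ε * μ i * (z i ^ 2 / (u i + η)))
        + ∑ j, (π i / (u i + η) ^ 2 + ε / (u i + η)) * a i j * (u j * z i ^ 2 + u i * (z i * z j)))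
      ≤ z ⬝ᵥ (Hε * Aε).mulVec z := by
    rw [hQ]
    apply Finset.sum_le_sum
    intro i _
    have := hdiag i
    linarith
  have step2 : ∑ i, (∑ j, ((if i = j then 2 * (π i / (u i + η)) * a i i * z i ^ 2
          else -(π i * a i j / (4 * (u j + η))) * z j ^ 2)
        + (if i = j then 2 * ε * a i i * z i ^ 2
          else -(ε * a i j / 2) * (z i ^ 2 + z j ^ 2))))
      ≤ ∑ i, (∑ j, ((π i / (u i + η) ^ 2 + ε / (u i + η)) * (η * (a i j * (1 + if i = j then 1 else 0))) * z i ^ 2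
        + (π i / (u i + η) ^ 2 + ε / (u i + η)) * a i j * (u j * z i ^ 2 + u i * (z i * z j)))) :=
    Finset.sum_le_sum fun i _ => Finset.sum_le_sum fun j _ => hTB i j
  have split1 : ∀ i, ∑ j, ((π i / (u i + η) ^ 2 + ε / (u i + η)) * (η * (a i j * (1 + if i = j then 1 else 0))) * z i ^ 2
        + (π i / (u i + η) ^ 2 + ε / (u i + η)) * a i j * (u j * z i ^ 2 + u i * (z i * z j)))
      = (∑ j, (π i / (u i + η) ^ 2 + ε / (u i + η)) * (η * (a i j * (1 + if i = j then 1 else 0))) * z i ^ 2)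
        + ∑ j, (π i / (u i + η) ^ 2 + ε / (u i + η)) * a i j * (u j * z i ^ 2 + u i * (z i * z j)) :=
    fun i => Finset.sum_add_distrib
  have split2 : ∀ i, ∑ j, ((if i = j then 2 * (π i / (u i + η)) * a i i * z i ^ 2
          else -(π i * a i j / (4 * (u j + η))) * z j ^ 2)
        + (if i = j then 2 * ε * a i i * z i ^ 2
          else -(ε * a i j / 2) * (z i ^ 2 + z j ^ 2)))
      = (∑ j, (if i = j then 2 * (π i / (u i + η)) * a i i * z i ^ 2
          else -(π i * a i j / (4 * (u j + η))) * z j ^ 2))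
        + ∑ j, (if i = j then 2 * ε * a i i * z i ^ 2
          else -(ε * a i j / 2) * (z i ^ 2 + z j ^ 2)) :=
    fun i => Finset.sum_add_distrib
  -- turn the per-i sums into global sums
  have glob : (∑ j, κ / 4 * (z j ^ 2 / (u j + η))) + (-(ε * ∑ i, μ i * z i ^ 2))
        + ∑ i, (ε * μ i * z i ^ 2 - 2 * η * ε * μ i * (z i ^ 2 / (u i + η)))
      ≤ z ⬝ᵥ (Hε * Aε).mulVec z := by
    have t1 : ∑ i, ((∑ j, (π i / (u i + η) ^ 2 + ε / (u i + η)) * (η * (a i j * (1 + if i = j then 1 else 0))) * z i ^ 2)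
          + (ε * μ i * z i ^ 2 - 2 * η * ε * μ i * (z i ^ 2 / (u i + η)))
          + ∑ j, (π i / (u i + η) ^ 2 + ε / (u i + η)) * a i j * (u j * z i ^ 2 + u i * (z i * z j)))
        = (∑ i, ∑ j, ((π i / (u i + η) ^ 2 + ε / (u i + η)) * (η * (a i j * (1 + if i = j then 1 else 0))) * z i ^ 2
            + (π i / (u i + η) ^ 2 + ε / (u i + η)) * a i j * (u j * z i ^ 2 + u i * (z i * z j))))
          + ∑ i, (ε * μ i * z i ^ 2 - 2 * η * ε * μ i * (z i ^ 2 / (u i + η))) := by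
      rw [← Finset.sum_add_distrib]
      exact Finset.sum_congr rfl fun i _ => by rw [split1 i]; ring
    have t2 : ∑ i, (∑ j, ((if i = j then 2 * (π i / (u i + η)) * a i i * z i ^ 2
            else -(π i * a i j / (4 * (u j + η))) * z j ^ 2)
          + (if i = j then 2 * ε * a i i * z i ^ 2
            else -(ε * a i j / 2) * (z i ^ 2 + z j ^ 2))))
        = (∑ i, ∑ j, (if i = j then 2 * (π i / (u i + η)) * a i i * z i ^ 2
            else -(π i * a i j / (4 * (u j + η))) * z j ^ 2))
          + ∑ i, ∑ j, (if i = j then 2 * ε * a i i * z i ^ 2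
            else -(ε * a i j / 2) * (z i ^ 2 + z j ^ 2)) := by
      rw [← Finset.sum_add_distrib]
      exact Finset.sum_congr rfl fun i _ => split2 i
    have := step1
    rw [t1] at this
    have h2 := step2
    rw [t2] at h2
    linarith [hB1, hB23]
  -- final comparison with the stated right-hand side
  have fin1 : ∑ i, (ε * μ i * z i ^ 2 - 2 * η * ε * μ i * (z i ^ 2 / (u i + η)))
      = ε * (∑ i, μ i * z i ^ 2) - ∑ i, 2 * η * ε * μ i * (z i ^ 2 / (u i + η)) := by
    rw [Finset.sum_sub_distrib, Finset.mul_sum]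
    congr 1
    exact Finset.sum_congr rfl fun i _ => by ring
  have fin2 : ∑ i, 2 * η * ε * μ i * (z i ^ 2 / (u i + η))
      ≤ η * ε * C₁ * ∑ i, z i ^ 2 / (u i + η) := by
    rw [Finset.mul_sum]
    apply Finset.sum_le_sum
    intro i _
    have h1 : 2 * μ i ≤ C₁ := hC₁μ i
    have h2 : 0 ≤ η * ε * (z i ^ 2 / (u i + η)) := by
      have := hv i
      positivity
    nlinarith
  have fin3 : 0 ≤ η * ε ^ 2 * C₂ * ∑ i, z i ^ 2 := by
    have : 0 ≤ ∑ i, z i ^ 2 := Finset.sum_nonneg fun i _ => sq_nonneg (z i)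
    positivity
  have fin4 : ∑ j, κ / 4 * (z j ^ 2 / (u j + η)) = κ / 4 * ∑ i, z i ^ 2 / (u i + η) := by
    rw [Finset.mul_sum]
  rw [ge_iff_le]
  rw [fin1] at glob
  rw [fin4] at glob
  linarith [glob, fin2, fin3]
end

section
/- In the setting of the shifted matrices: with H(v)_{ij} = δ_{ij}π_i/v_i², A(u)_{ij} = δ_{ij}a₀_i + δ_{ij}∑_k a_{ik}u_k + a_{ij}u_i, and A¹_{ij} = δ_{ij}(∑_k a_{ik} + a_{ij}), for every z ∈ ℝⁿ, every η > 0, and every u ∈ (0,∞)ⁿ, it holds that zᵀ H(u+η)(A(u) + ηA¹) z ≥ ∑_i π_i a₀_i z_i²/(u_i+η)² + (1/4) ∑_i (8π_i a_{ii} − ∑_{j≠i} π_j a_{ji}) z_i²/(u_i+η). -/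
open Matrix Finset


lemma sum_erase_swap' {n : ℕ} (f : Fin n → Fin n → ℝ) :
    ∑ i, ∑ j ∈ univ.erase i, f i j = ∑ i, ∑ j ∈ univ.erase i, f j i := by
  have h : ∀ g : Fin n → Fin n → ℝ, ∀ i : Fin n,
      ∑ j ∈ univ.erase i, g i j = ∑ j, if j = i then 0 else g i j := by
    intro g i
    rw [Finset.sum_ite, Finset.sum_const_zero, zero_add]
    congr 1
    ext j
    simp [Finset.mem_filter, Finset.mem_erase]
  simp_rw [h]
  rw [Finset.sum_comm]
  apply Finset.sum_congr rfl
  intro i _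
  rw [h (fun i j => f j i) i]
  apply Finset.sum_congr rfl
  intro j _
  by_cases hij : i = j <;> simp [hij, eq_comm]

lemma auxdiag (p c d x : ℝ) (hp : p ≠ 0) :
    c / p ^ 2 * (d * p) * x ^ 2 * 2 = 2 * (c * d * x ^ 2 / p) := by
  field_simp

lemma auxfrac (p q c v x y : ℝ) (hp : p ≠ 0) (hq : q ≠ 0) :
    c / p ^ 2 * q * x ^ 2 + c / p ^ 2 * v * x * y + 1 / 4 * (c * y ^ 2 / q)
      = c * (4 * x ^ 2 * q ^ 2 + 4 * v * x * y * q + y ^ 2 * p ^ 2)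
        / (4 * p ^ 2 * q) := by
  field_simp

theorem stmt6 (n : ℕ) (hn : 1 ≤ n)
    (a : Fin n → Fin n → ℝ) (ha : ∀ i j, 0 ≤ a i j)
    (a0 : Fin n → ℝ) (ha0 : ∀ i, 0 ≤ a0 i)
    (π : Fin n → ℝ) (hπ : ∀ i, 0 < π i)
    (η : ℝ) (hη : 0 < η)
    (u z : Fin n → ℝ) (hu : ∀ i, 0 < u i)
    (Hsh A A1 : Matrix (Fin n) (Fin n) ℝ)
    (hH : ∀ i j, Hsh i j = if i = j then π i / (u i + η) ^ 2 else 0)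
    (hA : ∀ i j, A i j = (if i = j then a0 i else 0)
      + (if i = j then ∑ k, a i k * u k else 0) + a i j * u i)
    (hA1 : ∀ i j, A1 i j = if i = j then (∑ k, a i k) + a i j else 0) :
    z ⬝ᵥ (Hsh * (A + η • A1)).mulVec z ≥
      ∑ i, π i * a0 i * (z i) ^ 2 / (u i + η) ^ 2
      + (1 / 4) * ∑ i, (8 * π i * a i i - ∑ j ∈ univ.erase i, π j * a j i)
          * (z i) ^ 2 / (u i + η) := by
  set P : Fin n → ℝ := fun i => u i + η with hPdef
  have hPpos : ∀ i, 0 < P i := fun i => add_pos (hu i) hη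
  have hPne : ∀ i, P i ≠ 0 := fun i => (hPpos i).ne'
  -- Step 1: rewrite LHS as an explicit double sum
  have hLHS : z ⬝ᵥ (Hsh * (A + η • A1)).mulVec z
      = ∑ i, π i / P i ^ 2 * z i * (∑ j, (A + η • A1) i j * z j) := by
    simp only [dotProduct, mulVec, Matrix.mul_apply, hH, ite_mul, zero_mul,
      Finset.sum_ite_eq, Finset.mem_univ, if_true]
    apply Finset.sum_congr rfl
    intro i _
    rw [Finset.mul_sum, Finset.mul_sum]
    apply Finset.sum_congr rfl
    intro j _
    ring
  -- Step 2: inner sum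
  have hInner : ∀ i, (∑ j, (A + η • A1) i j * z j)
      = (a0 i + (∑ k, a i k * P k) + a i i * P i) * z i
        + u i * ∑ j ∈ univ.erase i, a i j * z j := by
    intro i
    have hM : ∀ j, (A + η • A1) i j
        = (if i = j then a0 i + (∑ k, a i k * u k)
            + η * ((∑ k, a i k) + a i i) else 0) + a i j * u i := by
      intro j
      simp only [Matrix.add_apply, Matrix.smul_apply, hA, hA1, smul_eq_mul]
      by_cases h : i = j
      · subst h; simp; ring
      · simp [h]
    simp_rw [hM, add_mul, Finset.sum_add_distrib, ite_mul, zero_mul,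
      Finset.sum_ite_eq, Finset.mem_univ, if_true]
    have hsplit : (∑ j, a i j * u i * z j)
        = a i i * u i * z i + ∑ j ∈ univ.erase i, a i j * u i * z j :=
      (Finset.add_sum_erase univ _ (Finset.mem_univ i)).symm
    rw [hsplit]
    have h2 : (∑ j ∈ univ.erase i, a i j * u i * z j)
        = u i * ∑ j ∈ univ.erase i, a i j * z j := by
      rw [Finset.mul_sum]
      apply Finset.sum_congr rfl
      intro j _
      ring
    have hPk : (∑ k, a i k * P k) = (∑ k, a i k * u k) + η * (∑ k, a i k) := by
      rw [Finset.mul_sum, ← Finset.sum_add_distrib]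
      apply Finset.sum_congr rfl
      intro k _
      simp only [hPdef]
      ring
    rw [h2, hPk]
    simp only [hPdef]
    ring
  rw [hLHS]
  simp_rw [hInner]
  -- Step 3: per-i decomposition of LHS
  have hkey : ∀ i, π i / P i ^ 2 * z i
        * ((a0 i + (∑ k, a i k * P k) + a i i * P i) * z i
          + u i * ∑ j ∈ univ.erase i, a i j * z j)
      = π i * a0 i * z i ^ 2 / P i ^ 2 + 2 * (π i * a i i * z i ^ 2 / P i)
        + ∑ j ∈ univ.erase i,
            (π i / P i ^ 2 * a i j * P j * z i ^ 2
              + π i / P i ^ 2 * u i * a i j * z i * z j) := by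
    intro i
    have hS : (∑ k, a i k * P k)
        = a i i * P i + ∑ k ∈ univ.erase i, a i k * P k :=
      (Finset.add_sum_erase univ _ (Finset.mem_univ i)).symm
    rw [hS]
    have hc : π i / P i ^ 2 * (a i i * P i) * z i ^ 2 * 2
        = 2 * (π i * a i i * z i ^ 2 / P i) := by
      exact auxdiag (P i) (π i) (a i i) (z i) (hPne i)
    rw [Finset.sum_add_distrib]
    rw [show (∑ j ∈ univ.erase i, π i / P i ^ 2 * a i j * P j * z i ^ 2)
        = (π i / P i ^ 2 * z i ^ 2) * ∑ j ∈ univ.erase i, a i j * P j by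
      rw [Finset.mul_sum]; apply Finset.sum_congr rfl; intro j _; ring]
    rw [show (∑ j ∈ univ.erase i, π i / P i ^ 2 * u i * a i j * z i * z j)
        = (π i / P i ^ 2 * z i * u i) * ∑ j ∈ univ.erase i, a i j * z j by
      rw [Finset.mul_sum]; apply Finset.sum_congr rfl; intro j _; ring]
    rw [← hc]
    rw [show π i * a0 i * z i ^ 2 / P i ^ 2 = π i / P i ^ 2 * a0 i * z i ^ 2 by
      ring]
    ring
  simp_rw [hkey]
  -- Step 4: decompose RHS
  rw [Finset.mul_sum]
  have hrhs : ∀ i, 1 / 4 * ((8 * π i * a i i - ∑ j ∈ univ.erase i, π j * a j i)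
        * z i ^ 2 / P i)
      = 2 * (π i * a i i * z i ^ 2 / P i)
        - ∑ j ∈ univ.erase i, 1 / 4 * (π j * a j i * z i ^ 2 / P i) := by
    intro i
    rw [sub_mul, sub_div, mul_sub, Finset.sum_mul, Finset.sum_div,
      Finset.mul_sum]
    congr 1
    ring
  change _ ≥ ∑ i, π i * a0 i * z i ^ 2 / P i ^ 2 + ∑ i, 1 / 4 * ((8 * π i * a i i
    - ∑ j ∈ univ.erase i, π j * a j i) * z i ^ 2 / P i)
  simp_rw [hrhs]
  rw [ge_iff_le, ← sub_nonneg]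
  have hswap : ∑ i, ∑ j ∈ univ.erase i, 1 / 4 * (π j * a j i * z i ^ 2 / P i)
      = ∑ i, ∑ j ∈ univ.erase i, 1 / 4 * (π i * a i j * z j ^ 2 / P j) :=
    sum_erase_swap' (fun i j => 1 / 4 * (π j * a j i * z i ^ 2 / P i))
  have hdiff : (∑ i, (π i * a0 i * z i ^ 2 / P i ^ 2
          + 2 * (π i * a i i * z i ^ 2 / P i)
          + ∑ j ∈ univ.erase i,
              (π i / P i ^ 2 * a i j * P j * z i ^ 2
                + π i / P i ^ 2 * u i * a i j * z i * z j)))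
      - (∑ i, π i * a0 i * z i ^ 2 / P i ^ 2
          + ∑ i, (2 * (π i * a i i * z i ^ 2 / P i)
            - ∑ j ∈ univ.erase i, 1 / 4 * (π j * a j i * z i ^ 2 / P i)))
      = ∑ i, (∑ j ∈ univ.erase i,
            (π i / P i ^ 2 * a i j * P j * z i ^ 2
              + π i / P i ^ 2 * u i * a i j * z i * z j)
          + ∑ j ∈ univ.erase i, 1 / 4 * (π i * a i j * z j ^ 2 / P j)) := by
    rw [Finset.sum_add_distrib, Finset.sum_add_distrib, Finset.sum_sub_distrib,
      Finset.sum_add_distrib, hswap]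
    ring
  rw [hdiff]
  apply Finset.sum_nonneg
  intro i _
  rw [← Finset.sum_add_distrib]
  apply Finset.sum_nonneg
  intro j _
  have h4 : 0 ≤ 4 * z i ^ 2 * P j ^ 2 + 4 * u i * z i * z j * P j
      + z j ^ 2 * P i ^ 2 := by
    have hup : u i ≤ P i := by simp only [hPdef]; linarith
    nlinarith [sq_nonneg (2 * z i * P j + u i * z j), sq_nonneg (z j),
      (hu i).le,
      mul_nonneg (sq_nonneg (z j))
        (mul_nonneg (by linarith : (0:ℝ) ≤ P i - u i)
          (by linarith [hPpos i, (hu i).le] : (0:ℝ) ≤ P i + u i))]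
  have heq : π i / P i ^ 2 * a i j * P j * z i ^ 2
        + π i / P i ^ 2 * u i * a i j * z i * z j
        + 1 / 4 * (π i * a i j * z j ^ 2 / P j)
      = π i * a i j * (4 * z i ^ 2 * P j ^ 2 + 4 * u i * z i * z j * P j
          + z j ^ 2 * P i ^ 2) / (4 * P i ^ 2 * P j) := by
    linear_combination auxfrac (P i) (P j) (π i * a i j) (u i) (z i) (z j)
      (hPne i) (hPne j)
  rw [heq]
  apply div_nonneg
  · exact mul_nonneg (mul_nonneg (hπ i).le (ha i j)) h4
  · exact (mul_pos (mul_pos (by norm_num : (0:ℝ) < 4)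
      (pow_pos (hPpos i) 2)) (hPpos j)).le
end

section
/- Let Ω ⊂ ℝ^d be a bounded measurable set with finite positive measure, η > 0, and u : Ω → [0,∞) integrable with average ū = (1/|Ω|)∫_Ω u dx. Define H(u|ū) = ∫_Ω (log(ū+η) − log(u+η)) dx. Then H(u|ū) ≥ 0, and moreover ‖u − ū‖_{L¹(Ω)} ≤ √8 · (ū+η) · |Ω|^{1/2} · H(u|ū)^{1/2}. -/
open MeasureTheory

lemma aux_log (v : ℝ) (hv : 0 < v) :
    (max (1 - v) 0)^2 ≤ 2*(v - 1 - Real.log v) := by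
  rcases le_or_gt 1 v with h1 | h1
  · have hl := Real.log_le_sub_one_of_pos hv
    rw [max_eq_right (by linarith)]
    nlinarith
  · rw [max_eq_left (by linarith)]
    set f : ℝ → ℝ := fun x => 2*(x - 1 - Real.log x) - (1-x)^2 with hf
    have hd : ∀ x ∈ Set.Icc v 1, HasDerivAt f (2*(1 - x⁻¹) - 2*(1-x)^1*(-1)) x := by
      intro x hx
      have hx0 : 0 < x := lt_of_lt_of_le hv hx.1
      have h1 : HasDerivAt (fun x : ℝ => x - 1 - Real.log x) (1 - x⁻¹) x := by
        simpa using (((hasDerivAt_id x).sub_const 1).fun_sub (Real.hasDerivAt_log hx0.ne'))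
      have h2 : HasDerivAt (fun x : ℝ => (1-x)^2) (2*(1-x)^1*(-1)) x := by
        have := (((hasDerivAt_id x).const_sub 1).fun_pow 2)
        simpa using this
      simpa using (h1.const_mul 2).fun_sub h2
    have hmono : AntitoneOn f (Set.Icc v 1) := by
      apply antitoneOn_of_deriv_nonpos (convex_Icc v 1)
      · exact fun x hx => ((hd x hx).continuousAt).continuousWithinAt
      · intro x hx
        rw [interior_Icc] at hx
        exact ((hd x (Set.Ioo_subset_Icc_self hx)).differentiableAt).differentiableWithinAt
      · intro x hx
        rw [interior_Icc] at hx
        rw [(hd x (Set.Ioo_subset_Icc_self hx)).deriv]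
        have hx0 : 0 < x := lt_trans hv hx.1
        have hinv : x * x⁻¹ = 1 := mul_inv_cancel₀ hx0.ne'
        nlinarith [sq_nonneg (x - 1), hx0.le]
    have hle : f 1 ≤ f v := hmono ⟨le_refl v, h1.le⟩ ⟨h1.le, le_refl 1⟩ h1.le
    have hf1 : f 1 = 0 := by simp [hf]
    rw [hf1] at hle
    simp only [hf] at hle
    linarith


theorem stmt8 (d : ℕ) (Ω : Set (EuclideanSpace ℝ (Fin d)))
    (hΩm : MeasurableSet Ω) (hΩfin : volume Ω < ⊤) (hΩpos : 0 < volume Ω)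
    (η : ℝ) (hη : 0 < η)
    (u : EuclideanSpace ℝ (Fin d) → ℝ) (hu : ∀ x ∈ Ω, 0 ≤ u x)
    (hint : IntegrableOn u Ω)
    (ubar H : ℝ)
    (hubar : ubar = (∫ x in Ω, u x) / (volume Ω).toReal)
    (hH : H = ∫ x in Ω, (Real.log (ubar + η) - Real.log (u x + η))) :
    0 ≤ H ∧
    ∫ x in Ω, |u x - ubar| ≤
      Real.sqrt 8 * (ubar + η) * Real.sqrt ((volume Ω).toReal) * Real.sqrt H := by
  have hm : 0 < (volume Ω).toReal := ENNReal.toReal_pos hΩpos.ne' hΩfin.ne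
  set m : ℝ := (volume Ω).toReal with hmdef
  have hub : 0 ≤ ubar := by
    rw [hubar]; exact div_nonneg (setIntegral_nonneg hΩm hu) hm.le
  have hM : 0 < ubar + η := by linarith
  have hIu : ∫ x in Ω, u x = ubar * m := by
    rw [hubar, div_mul_cancel₀ _ hm.ne']
  have hconst2 : ∀ c : ℝ, IntegrableOn (fun _ : EuclideanSpace ℝ (Fin d) => c) Ω :=
    fun c => integrableOn_const hΩfin.ne
  have hIconst : ∀ c : ℝ, ∫ _x in Ω, c = m * c := by
    intro c; rw [setIntegral_const, smul_eq_mul, hmdef, measureReal_def]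
  have huae : AEMeasurable u (volume.restrict Ω) := hint.aemeasurable
  -- integrability of the log term
  have hlog_meas : AEStronglyMeasurable (fun x => Real.log (u x + η)) (volume.restrict Ω) :=
    (Real.measurable_log.comp_aemeasurable (huae.add_const η)).aestronglyMeasurable
  have hbd_int : IntegrableOn (fun x => |Real.log η| + η + u x) Ω :=
    (hconst2 (|Real.log η| + η)).add hint
  have hlog_int : IntegrableOn (fun x => Real.log (u x + η)) Ω := by
    apply Integrable.mono' hbd_int hlog_meas
    filter_upwards [self_mem_ae_restrict hΩm] with x hx
    have h0 := hu x hx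
    have h1 : Real.log (u x + η) ≤ u x + η - 1 :=
      Real.log_le_sub_one_of_pos (by linarith)
    have h2 : Real.log η ≤ Real.log (u x + η) :=
      Real.log_le_log hη (by linarith)
    have h3 : -|Real.log η| ≤ Real.log η := neg_abs_le _
    have h4 : Real.log η ≤ |Real.log η| := le_abs_self _
    rw [Real.norm_eq_abs, abs_le]
    constructor <;> nlinarith
  -- the entropy density Ψ
  set Ψ : EuclideanSpace ℝ (Fin d) → ℝ :=
    fun x => (u x - ubar)/(ubar+η) + (Real.log (ubar + η) - Real.log (u x + η)) with hΨdef
  have hΨ1_int : IntegrableOn (fun x => (u x - ubar)/(ubar+η)) Ω :=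
    (hint.sub (hconst2 ubar)).div_const _
  have hΨ2_int : IntegrableOn (fun x => Real.log (ubar + η) - Real.log (u x + η)) Ω :=
    (hconst2 (Real.log (ubar+η))).sub hlog_int
  have hΨ_int : IntegrableOn Ψ Ω := hΨ1_int.add hΨ2_int
  have hΨ_eq : ∀ x ∈ Ω, Ψ x = (u x + η)/(ubar+η) - 1 - Real.log ((u x + η)/(ubar+η)) := by
    intro x hx
    have h0 := hu x hx
    rw [Real.log_div (by linarith) hM.ne']
    simp only [hΨdef]
    field_simp
    ring
  have hΨ_nonneg : ∀ x ∈ Ω, 0 ≤ Ψ x := by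
    intro x hx
    have h0 := hu x hx
    have hv : 0 < (u x + η)/(ubar+η) := div_pos (by linarith) hM
    have := Real.log_le_sub_one_of_pos hv
    rw [hΨ_eq x hx]; linarith
  have hIΨ : ∫ x in Ω, Ψ x = H := by
    have e0 : ∫ x in Ω, Ψ x = (∫ x in Ω, (u x - ubar)/(ubar+η))
        + ∫ x in Ω, (Real.log (ubar + η) - Real.log (u x + η)) :=
      integral_add hΨ1_int hΨ2_int
    have e1 : ∫ x in Ω, (u x - ubar)/(ubar+η) = 0 := by
      rw [integral_div, integral_sub hint (hconst2 ubar), hIu, hIconst]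
      simp [mul_comm]
    rw [e0, e1, hH]
    ring
  have hHnn : 0 ≤ H := by
    rw [← hIΨ]; exact setIntegral_nonneg hΩm hΨ_nonneg
  refine ⟨hHnn, ?_⟩
  -- the negative-part function g
  set g : EuclideanSpace ℝ (Fin d) → ℝ := fun x => max (ubar - u x) 0 with hgdef
  have hg_nonneg : ∀ x, 0 ≤ g x := fun x => le_max_right _ _
  have hg_meas : AEStronglyMeasurable g (volume.restrict Ω) :=
    ((aemeasurable_const.sub huae).max aemeasurable_const).aestronglyMeasurable
  have hgbd_int : IntegrableOn (fun x => |ubar| + |u x|) Ω :=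
    (hconst2 |ubar|).add hint.abs
  have hg_int : IntegrableOn g Ω := by
    apply Integrable.mono' hgbd_int hg_meas
    filter_upwards with x
    rw [Real.norm_of_nonneg (hg_nonneg x)]
    apply max_le
    · have h1 := le_abs_self ubar
      have h2 := neg_abs_le (u x)
      linarith
    · positivity
  -- key pointwise bound
  have hkey : ∀ x ∈ Ω, g x ^ 2 ≤ 2*(ubar+η)^2 * Ψ x := by
    intro x hx
    have h0 := hu x hx
    have hv : 0 < (u x + η)/(ubar+η) := div_pos (by linarith) hM
    have h1 := aux_log _ hv
    have e1 : 1 - (u x + η)/(ubar+η) = (ubar - u x)/(ubar+η) := by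
      field_simp
      ring
    have e2 : max ((ubar - u x)/(ubar+η)) 0 = (max (ubar - u x) 0) / (ubar+η) := by
      rw [← max_div_div_right hM.le (ubar - u x) 0, zero_div]
    rw [e1, e2, div_pow] at h1
    rw [div_le_iff₀ (show (0:ℝ) < (ubar+η)^2 by positivity)] at h1
    rw [hΨ_eq x hx]
    calc g x ^ 2
        ≤ 2 * ((u x + η)/(ubar+η) - 1 - Real.log ((u x + η)/(ubar+η))) * (ubar+η)^2 := h1
      _ = 2*(ubar+η)^2 * ((u x + η)/(ubar+η) - 1 - Real.log ((u x + η)/(ubar+η))) := by ring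
  have hg2_int : IntegrableOn (fun x => g x ^ 2) Ω := by
    apply Integrable.mono' (hΨ_int.const_mul (2*(ubar+η)^2)) (hg_meas.pow 2)
    filter_upwards [self_mem_ae_restrict hΩm] with x hx
    simp only [Pi.pow_apply]
    rw [Real.norm_of_nonneg (sq_nonneg _)]
    exact hkey x hx
  -- Cauchy-Schwarz
  haveI : Fact (volume Ω < ⊤) := ⟨hΩfin⟩
  have hCS : ∫ x in Ω, g x ≤ Real.sqrt (∫ x in Ω, g x ^ 2) * Real.sqrt m := by
    have hpq : Real.HolderConjugate 2 2 := Real.holderConjugate_iff.mpr ⟨one_lt_two, by norm_num⟩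
    have hmem1 : MemLp g (ENNReal.ofReal 2) (volume.restrict Ω) := by
      rw [show ENNReal.ofReal 2 = 2 by simp]
      exact (memLp_two_iff_integrable_sq hg_meas).2 hg2_int
    have hmem2 : MemLp (fun _ : EuclideanSpace ℝ (Fin d) => (1:ℝ)) (ENNReal.ofReal 2)
        (volume.restrict Ω) := memLp_const 1
    have h := integral_mul_le_Lp_mul_Lq_of_nonneg hpq
      (ae_of_all _ hg_nonneg) (ae_of_all _ fun _ => zero_le_one) hmem1 hmem2
    simp only [mul_one, Real.one_rpow] at h
    have e1 : ∫ x in Ω, g x ^ (2:ℝ) = ∫ x in Ω, g x ^ 2 := by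
      apply integral_congr_ae; filter_upwards with x
      rw [show ((2:ℝ) = ((2:ℕ):ℝ)) by norm_num, Real.rpow_natCast]
    have e2 : ∫ _x in Ω, (1:ℝ) = m := by rw [hIconst, mul_one]
    rw [e1, e2] at h
    calc ∫ x in Ω, g x ≤ (∫ x in Ω, g x ^ 2) ^ (1/(2:ℝ)) * m ^ (1/(2:ℝ)) := h
      _ = Real.sqrt (∫ x in Ω, g x ^ 2) * Real.sqrt m := by
          rw [← Real.sqrt_eq_rpow, ← Real.sqrt_eq_rpow]
  -- ∫ g² ≤ 2M²H
  have hg2H : ∫ x in Ω, g x ^ 2 ≤ 2*(ubar+η)^2 * H := by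
    calc ∫ x in Ω, g x ^ 2 ≤ ∫ x in Ω, 2*(ubar+η)^2 * Ψ x :=
          setIntegral_mono_on hg2_int (hΨ_int.const_mul _) hΩm hkey
      _ = 2*(ubar+η)^2 * ∫ x in Ω, Ψ x := integral_const_mul _ _
      _ = 2*(ubar+η)^2 * H := by rw [hIΨ]
  -- pointwise abs identity
  have habs : ∀ x, |u x - ubar| = (u x - ubar) + 2 * g x := by
    intro x
    rcases le_total (u x) ubar with h | h
    · rw [abs_of_nonpos (show u x - ubar ≤ 0 by linarith),
        show g x = max (ubar - u x) 0 from rfl,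
        max_eq_left (show (0:ℝ) ≤ ubar - u x by linarith)]
      ring
    · rw [abs_of_nonneg (show (0:ℝ) ≤ u x - ubar by linarith),
        show g x = max (ubar - u x) 0 from rfl,
        max_eq_right (show ubar - u x ≤ (0:ℝ) by linarith)]
      ring
  have hIabs : ∫ x in Ω, |u x - ubar| = 2 * ∫ x in Ω, g x := by
    have h1 : IntegrableOn (fun x => u x - ubar) Ω := hint.sub (hconst2 ubar)
    have h2 : IntegrableOn (fun x => 2 * g x) Ω := hg_int.const_mul 2
    simp_rw [habs]
    rw [integral_add h1 h2, integral_sub hint (hconst2 ubar), hIu, hIconst,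
      integral_const_mul]
    ring
  -- finish
  rw [hIabs]
  have hsq : Real.sqrt (∫ x in Ω, g x ^ 2) ≤ Real.sqrt 2 * (ubar+η) * Real.sqrt H := by
    calc Real.sqrt (∫ x in Ω, g x ^ 2) ≤ Real.sqrt (2*(ubar+η)^2 * H) :=
          Real.sqrt_le_sqrt hg2H
      _ = Real.sqrt 2 * (ubar+η) * Real.sqrt H := by
          rw [Real.sqrt_mul (by positivity), Real.sqrt_mul (by norm_num),
            Real.sqrt_sq hM.le]
  have h8 : Real.sqrt 8 = 2 * Real.sqrt 2 := by
    rw [show (8:ℝ) = 2^2 * 2 by norm_num, Real.sqrt_mul (by positivity),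
      Real.sqrt_sq (by norm_num)]
  have hsm : (0:ℝ) ≤ Real.sqrt m := Real.sqrt_nonneg _
  calc 2 * ∫ x in Ω, g x ≤ 2 * (Real.sqrt (∫ x in Ω, g x ^ 2) * Real.sqrt m) := by
        linarith
    _ ≤ 2 * ((Real.sqrt 2 * (ubar+η) * Real.sqrt H) * Real.sqrt m) := by
        have := mul_le_mul_of_nonneg_right hsq hsm
        linarith
    _ = Real.sqrt 8 * (ubar + η) * Real.sqrt m * Real.sqrt H := by
        rw [h8]; ring
end

section
/- Let n = 3, a_{13} = a_{21} = a_{32} = 1, a_{12} = a_{23} = a_{31} = 0, and suppose a_{11} = a_{22} = a_{33} = s > 0. Then the condition of [CDJ18], namely 4a_{ii} > ∑_j (√(a_{ij}) − √(a_{ji}))² for all i, holds if and only if s > 1/2; whereas the condition of the present paper, existence of π₁, π₂, π₃ > 0 with 8π_i a_{ii} > ∑_{j≠i} π_j a_{ji} for all i, holds if and only if s > 1/8. -/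
open Finset

theorem stmt16 (s : ℝ) (hs : 0 < s)
    (a : Fin 3 → Fin 3 → ℝ)
    (hadef : a = ![![s, 0, 1], ![1, s, 0], ![0, 1, s]]) :
    ((∀ i, 4 * a i i > ∑ j, (Real.sqrt (a i j) - Real.sqrt (a j i)) ^ 2) ↔
      s > 1 / 2) ∧
    ((∃ π : Fin 3 → ℝ, (∀ i, 0 < π i) ∧
        ∀ i, 8 * π i * a i i > ∑ j ∈ univ.erase i, π j * a j i) ↔
      s > 1 / 8) := by
  subst hadef
  constructor
  · constructor
    · intro h
      have h0 := h 0
      simp [Fin.sum_univ_three, Real.sqrt_zero, Real.sqrt_one] at h0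
      linarith
    · intro h i
      fin_cases i <;>
        simp [Fin.sum_univ_three, Real.sqrt_zero, Real.sqrt_one] <;> linarith
  · constructor
    · rintro ⟨π, hpos, h⟩
      have h0 := h 0
      have h1 := h 1
      have h2 := h 2
      have e0 : (univ.erase (0 : Fin 3)) = {1, 2} := by decide
      have e1 : (univ.erase (1 : Fin 3)) = {0, 2} := by decide
      have e2 : (univ.erase (2 : Fin 3)) = {0, 1} := by decide
      rw [e0] at h0; rw [e1] at h1; rw [e2] at h2
      simp [Finset.sum_insert, Finset.sum_singleton] at h0 h1 h2
      by_contra hns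
      push_neg at hns
      have p0 := hpos 0
      have p1 := hpos 1
      have p2 := hpos 2
      have c0 : 8 * π 0 * s ≤ π 0 := by nlinarith
      have c1 : 8 * π 1 * s ≤ π 1 := by nlinarith
      have c2 : 8 * π 2 * s ≤ π 2 := by nlinarith
      linarith
    · intro h
      refine ⟨fun _ => 1, fun _ => one_pos, ?_⟩
      intro i
      fin_cases i <;>
        · have e : True := trivial
          simp [Finset.sum_erase_eq_sub, Fin.sum_univ_three]
          linarith
end

section
/- Let H_ε(u)_{ij} = δ_{ij}(π_i/u_i² + ε/u_i) and A_ε(u) = A(u) + εA⁰(u) as above, with a_{ij} ≥ 0, a₀_i ≥ 0, π_i > 0, ε > 0, μ_i ≥ (1/2)∑_{j≠i}(a_{ij}+a_{ji}), and κ = min_i(8π_i a_{ii} − ∑_{j≠i}π_j a_{ji}) > 0. Then for all u ∈ (0,∞)ⁿ and z ∈ ℝⁿ: zᵀ H_ε(u) A_ε(u) z ≥ κ ∑_i z_i²/(4u_i) + 2ε (min_i a_{ii}) ∑_i z_i². -/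
set_option maxHeartbeats 1000000


open Matrix Finset

theorem stmt18 (n : ℕ) (hn : 1 ≤ n)
    (a : Fin n → Fin n → ℝ) (ha : ∀ i j, 0 ≤ a i j)
    (a0 : Fin n → ℝ) (ha0 : ∀ i, 0 ≤ a0 i)
    (π : Fin n → ℝ) (hπ : ∀ i, 0 < π i)
    (ε : ℝ) (hε : 0 < ε)
    (μ : Fin n → ℝ) (hμ : ∀ i, (1 / 2) * ∑ j ∈ univ.erase i, (a i j + a j i) ≤ μ i)
    (hne : (univ : Finset (Fin n)).Nonempty)
    (κ : ℝ)
    (hκ : κ = univ.inf' hne (fun i => 8 * π i * a i i - ∑ j ∈ univ.erase i, π j * a j i))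
    (hκpos : 0 < κ)
    (u z : Fin n → ℝ) (hu : ∀ i, 0 < u i)
    (Hε Aε : Matrix (Fin n) (Fin n) ℝ)
    (hH : ∀ i j, Hε i j = if i = j then π i / (u i) ^ 2 + ε / u i else 0)
    (hA : ∀ i j, Aε i j = (if i = j then a0 i else 0)
      + (if i = j then ∑ k, a i k * u k else 0) + a i j * u i
      + ε * (if i = j then (μ i / π i) * (u i) ^ 2 else 0)) :
    z ⬝ᵥ (Hε * Aε).mulVec z ≥
      κ * ∑ i, (z i) ^ 2 / (4 * u i)
      + 2 * ε * (univ.inf' hne fun i => a i i) * ∑ i, (z i) ^ 2 := by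
  have hu0 : ∀ i, u i ≠ 0 := fun i => (hu i).ne'
  have hπ0 : ∀ i, π i ≠ 0 := fun i => (hπ i).ne'
  have hμ0 : ∀ i, 0 ≤ μ i := fun i =>
    le_trans (mul_nonneg (by norm_num)
      (Finset.sum_nonneg fun j _ => add_nonneg (ha i j) (ha j i))) (hμ i)
  -- swap lemma for double sums over off-diagonal pairs
  have swap : ∀ f : Fin n → Fin n → ℝ,
      ∑ i, ∑ j ∈ univ.erase i, f i j = ∑ i, ∑ j ∈ univ.erase i, f j i := by
    intro f
    exact Finset.sum_comm' (by
      intro x y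
      simp only [Finset.mem_univ, Finset.mem_erase, true_and, and_true]
      exact ne_comm)
  -- Step 1 : quadratic form as a double sum with diagonal H
  have hQ : z ⬝ᵥ (Hε * Aε).mulVec z =
      ∑ i, ∑ j, z i * ((π i / u i ^ 2 + ε / u i) * Aε i j) * z j := by
    simp only [dotProduct, Matrix.mulVec, Matrix.mul_apply, hH, ite_mul, zero_mul,
      Finset.sum_ite_eq, Finset.mem_univ, if_true]
    refine Finset.sum_congr rfl fun i _ => ?_
    rw [Finset.mul_sum]
    exact Finset.sum_congr rfl fun j _ => by ring
  -- Step 2 : expand each inner sum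
  have inner : ∀ i, ∑ j, z i * ((π i / u i ^ 2 + ε / u i) * Aε i j) * z j =
      (π i / u i ^ 2 + ε / u i) * z i ^ 2 * a0 i
      + (π i / u i ^ 2 + ε / u i) * z i ^ 2 * (∑ k, a i k * u k)
      + ε * ((π i / u i ^ 2 + ε / u i) * u i ^ 2 * (μ i / π i)) * z i ^ 2
      + ∑ j, (π i / u i ^ 2 + ε / u i) * u i * a i j * z i * z j := by
    intro i
    have pt : ∀ j, z i * ((π i / u i ^ 2 + ε / u i) * Aε i j) * z j =
        (if i = j then (π i / u i ^ 2 + ε / u i) * z i ^ 2 * a0 i else 0)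
        + (if i = j then (π i / u i ^ 2 + ε / u i) * z i ^ 2 * (∑ k, a i k * u k) else 0)
        + (if i = j then ε * ((π i / u i ^ 2 + ε / u i) * u i ^ 2 * (μ i / π i)) * z i ^ 2 else 0)
        + (π i / u i ^ 2 + ε / u i) * u i * a i j * z i * z j := by
      intro j
      rw [hA]
      split_ifs with h
      · subst h; ring
      · ring
    rw [Finset.sum_congr rfl fun j _ => pt j]
    rw [Finset.sum_add_distrib, Finset.sum_add_distrib, Finset.sum_add_distrib,
      Finset.sum_ite_eq, Finset.sum_ite_eq, Finset.sum_ite_eq]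
    simp
  -- names for the pieces
  set S0 := ∑ i, (π i / u i ^ 2 + ε / u i) * z i ^ 2 * a0 i with hS0def
  set S2 := ∑ i, ε * ((π i / u i ^ 2 + ε / u i) * u i ^ 2 * (μ i / π i)) * z i ^ 2 with hS2def
  set P1 := ∑ i, ∑ j, π i * a i j * u j * (z i ^ 2 / (4 * u i)) * (4 / u i) with hP1def
  set E1 := ∑ i, ∑ j, ε * a i j * u j * (z i ^ 2 / u i) with hE1def
  set P2 := ∑ i, ∑ j, π i * a i j * (z i * z j / u i) with hP2def
  set E2 := ∑ i, ∑ j, ε * a i j * (z i * z j) with hE2def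
  -- total decomposition
  have hQtotal : z ⬝ᵥ (Hε * Aε).mulVec z = S0 + (P1 + E1) + S2 + (P2 + E2) := by
    rw [hQ, Finset.sum_congr rfl fun i _ => inner i]
    rw [Finset.sum_add_distrib, Finset.sum_add_distrib, Finset.sum_add_distrib]
    have h1 : ∑ i, (π i / u i ^ 2 + ε / u i) * z i ^ 2 * (∑ k, a i k * u k) = P1 + E1 := by
      rw [hP1def, hE1def, ← Finset.sum_add_distrib]
      refine Finset.sum_congr rfl fun i _ => ?_
      rw [← Finset.sum_add_distrib, Finset.mul_sum]
      refine Finset.sum_congr rfl fun j _ => ?_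
      field_simp [hu0 i]
    have h3 : ∑ i, ∑ j, (π i / u i ^ 2 + ε / u i) * u i * a i j * z i * z j = P2 + E2 := by
      rw [hP2def, hE2def, ← Finset.sum_add_distrib]
      refine Finset.sum_congr rfl fun i _ => ?_
      rw [← Finset.sum_add_distrib]
      refine Finset.sum_congr rfl fun j _ => ?_
      field_simp [hu0 i]
    rw [h1, h3]
  -- S0 is nonnegative
  have hS0 : 0 ≤ S0 := by
    refine Finset.sum_nonneg fun i _ => ?_
    have h1 : 0 ≤ π i / u i ^ 2 + ε / u i :=
      add_nonneg (div_nonneg (hπ i).le (sq_nonneg _)) (div_nonneg hε.le (hu i).le)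
    exact mul_nonneg (mul_nonneg h1 (sq_nonneg _)) (ha0 i)
  -- the π-part
  have hP : κ * ∑ i, z i ^ 2 / (4 * u i) ≤ P1 + P2 := by
    have combine : P1 + P2 = ∑ i, ∑ j,
        π i * a i j * (u j * (z i ^ 2 / u i ^ 2) + z i * z j / u i) := by
      rw [hP1def, hP2def, ← Finset.sum_add_distrib]
      refine Finset.sum_congr rfl fun i _ => ?_
      rw [← Finset.sum_add_distrib]
      refine Finset.sum_congr rfl fun j _ => ?_
      field_simp [hu0 i]
    have split : ∀ i, ∑ j, π i * a i j * (u j * (z i ^ 2 / u i ^ 2) + z i * z j / u i)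
        = π i * a i i * (u i * (z i ^ 2 / u i ^ 2) + z i * z i / u i)
          + ∑ j ∈ univ.erase i, π i * a i j * (u j * (z i ^ 2 / u i ^ 2) + z i * z j / u i) :=
      fun i => (Finset.add_sum_erase univ _ (Finset.mem_univ i)).symm
    have hdiag : ∀ i, π i * a i i * (u i * (z i ^ 2 / u i ^ 2) + z i * z i / u i)
        = 8 * π i * a i i * (z i ^ 2 / (4 * u i)) := by
      intro i; field_simp [hu0 i]; ring
    have hoff : ∀ i, ∀ j ∈ univ.erase i,
        -(π i * a i j * (z j ^ 2 / (4 * u j)))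
          ≤ π i * a i j * (u j * (z i ^ 2 / u i ^ 2) + z i * z j / u i) := by
      intro i j _
      have key : π i * a i j * (u j * (z i ^ 2 / u i ^ 2) + z i * z j / u i)
          + π i * a i j * (z j ^ 2 / (4 * u j))
          = π i * a i j * ((u j * (z i / u i) + z j / 2) ^ 2 / u j) := by
        field_simp [hu0 i, hu0 j]
        ring
      have h2 : 0 ≤ π i * a i j * ((u j * (z i / u i) + z j / 2) ^ 2 / u j) :=
        mul_nonneg (mul_nonneg (hπ i).le (ha i j)) (div_nonneg (sq_nonneg _) (hu j).le)
      linarith [key ▸ h2]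
    have hswap : ∑ i, ∑ j ∈ univ.erase i, π i * a i j * (z j ^ 2 / (4 * u j))
        = ∑ i, (∑ j ∈ univ.erase i, π j * a j i) * (z i ^ 2 / (4 * u i)) := by
      rw [swap (fun i j => π i * a i j * (z j ^ 2 / (4 * u j)))]
      refine Finset.sum_congr rfl fun i _ => ?_
      rw [Finset.sum_mul]
    have step1 : ∑ i, (8 * π i * a i i - ∑ j ∈ univ.erase i, π j * a j i)
          * (z i ^ 2 / (4 * u i)) ≤ P1 + P2 := by
      rw [combine, Finset.sum_congr rfl fun i _ => split i, Finset.sum_add_distrib]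
      have hA2 : ∑ i, (-(∑ j ∈ univ.erase i, π j * a j i)) * (z i ^ 2 / (4 * u i))
          ≤ ∑ i, ∑ j ∈ univ.erase i,
            π i * a i j * (u j * (z i ^ 2 / u i ^ 2) + z i * z j / u i) := by
        have : ∑ i, (-(∑ j ∈ univ.erase i, π j * a j i)) * (z i ^ 2 / (4 * u i))
            = -∑ i, ∑ j ∈ univ.erase i, π i * a i j * (z j ^ 2 / (4 * u j)) := by
          rw [hswap, ← Finset.sum_neg_distrib]
          exact Finset.sum_congr rfl fun i _ => by ring
        rw [this, neg_le]
        rw [← Finset.sum_neg_distrib]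
        refine Finset.sum_le_sum fun i _ => ?_
        rw [← Finset.sum_neg_distrib]
        exact Finset.sum_le_sum fun j hj => neg_le.mp (hoff i j hj)
      have hA1 : ∑ i, (8 * π i * a i i) * (z i ^ 2 / (4 * u i))
          = ∑ i, π i * a i i * (u i * (z i ^ 2 / u i ^ 2) + z i * z i / u i) :=
        Finset.sum_congr rfl fun i _ => by rw [hdiag i]
      have expand : ∑ i, (8 * π i * a i i - ∑ j ∈ univ.erase i, π j * a j i)
            * (z i ^ 2 / (4 * u i))
          = ∑ i, (8 * π i * a i i) * (z i ^ 2 / (4 * u i))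
            + ∑ i, (-(∑ j ∈ univ.erase i, π j * a j i)) * (z i ^ 2 / (4 * u i)) := by
        rw [← Finset.sum_add_distrib]
        exact Finset.sum_congr rfl fun i _ => by ring
      rw [expand, hA1]
      exact add_le_add le_rfl hA2
    refine le_trans ?_ step1
    rw [Finset.mul_sum]
    refine Finset.sum_le_sum fun i _ => ?_
    have hk : κ ≤ 8 * π i * a i i - ∑ j ∈ univ.erase i, π j * a j i := by
      rw [hκ]; exact Finset.inf'_le _ (Finset.mem_univ i)
    have hw : 0 ≤ z i ^ 2 / (4 * u i) :=
      div_nonneg (sq_nonneg _) (by linarith [hu i])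
    exact mul_le_mul_of_nonneg_right hk hw
  -- the ε-parts
  have hE1 : ∑ i, ε * a i i * z i ^ 2 ≤ E1 := by
    refine Finset.sum_le_sum fun i _ => ?_
    have h1 : ε * a i i * z i ^ 2 = ε * a i i * u i * (z i ^ 2 / u i) := by
      field_simp [hu0 i]
    rw [h1]
    exact Finset.single_le_sum
      (f := fun j => ε * a i j * u j * (z i ^ 2 / u i))
      (fun j _ => mul_nonneg (mul_nonneg (mul_nonneg hε.le (ha i j)) (hu j).le)
        (div_nonneg (sq_nonneg _) (hu i).le))
      (Finset.mem_univ i)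
  have hS2 : ∑ i, ε * μ i * z i ^ 2 ≤ S2 := by
    refine Finset.sum_le_sum fun i _ => ?_
    have e1 : (π i / u i ^ 2 + ε / u i) * u i ^ 2 * (μ i / π i)
        = μ i + ε * u i * (μ i / π i) := by
      field_simp [hu0 i, hπ0 i]
    have h2 : 0 ≤ ε * u i * (μ i / π i) :=
      mul_nonneg (mul_nonneg hε.le (hu i).le) (div_nonneg (hμ0 i) (hπ i).le)
    rw [e1]
    nlinarith [sq_nonneg (z i), mul_nonneg (mul_nonneg hε.le h2) (sq_nonneg (z i))]
  have hE2 : ∑ i, ε * a i i * z i ^ 2 - ∑ i, ε * μ i * z i ^ 2 ≤ E2 := by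
    have splitE : E2 = ∑ i, ε * a i i * (z i * z i)
        + ∑ i, ∑ j ∈ univ.erase i, ε * a i j * (z i * z j) := by
      rw [hE2def, ← Finset.sum_add_distrib]
      exact Finset.sum_congr rfl fun i _ =>
        (Finset.add_sum_erase univ _ (Finset.mem_univ i)).symm
    have hcross : ∑ i, (-(ε * z i ^ 2 * ((1 / 2) * ∑ j ∈ univ.erase i, (a i j + a j i))))
        ≤ ∑ i, ∑ j ∈ univ.erase i, ε * a i j * (z i * z j) := by
      have e2 : ∀ i, -(ε * z i ^ 2 * ((1 / 2) * ∑ j ∈ univ.erase i, (a i j + a j i)))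
          = -(∑ j ∈ univ.erase i, (ε * a i j * (z i ^ 2 / 2) + ε * a j i * (z i ^ 2 / 2))) := by
        intro i
        rw [neg_inj, Finset.mul_sum, Finset.mul_sum]
        exact Finset.sum_congr rfl fun j _ => by ring
      have e3 : ∑ i, ∑ j ∈ univ.erase i, (ε * a i j * (z i ^ 2 / 2) + ε * a j i * (z i ^ 2 / 2))
          = ∑ i, ∑ j ∈ univ.erase i, (ε * a i j * (z i ^ 2 / 2) + ε * a i j * (z j ^ 2 / 2)) := by
        rw [Finset.sum_congr rfl fun i _ => Finset.sum_add_distrib,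
          Finset.sum_add_distrib]
        rw [Finset.sum_congr rfl (fun i (_ : i ∈ univ) => Finset.sum_add_distrib (s := univ.erase i)
          (f := fun j => ε * a i j * (z i ^ 2 / 2)) (g := fun j => ε * a i j * (z j ^ 2 / 2))),
          Finset.sum_add_distrib]
        congr 1
        exact swap (fun i j => ε * a j i * (z i ^ 2 / 2))
      calc ∑ i, (-(ε * z i ^ 2 * ((1 / 2) * ∑ j ∈ univ.erase i, (a i j + a j i))))
          = -∑ i, ∑ j ∈ univ.erase i, (ε * a i j * (z i ^ 2 / 2) + ε * a i j * (z j ^ 2 / 2)) := by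
            rw [← e3, ← Finset.sum_neg_distrib]
            exact Finset.sum_congr rfl fun i _ => e2 i
        _ ≤ ∑ i, ∑ j ∈ univ.erase i, ε * a i j * (z i * z j) := by
            rw [neg_le, ← Finset.sum_neg_distrib]
            refine Finset.sum_le_sum fun i _ => ?_
            rw [← Finset.sum_neg_distrib]
            refine Finset.sum_le_sum fun j _ => ?_
            nlinarith [mul_nonneg (mul_nonneg hε.le (ha i j)) (sq_nonneg (z i + z j))]
      
    have hμterm : ∑ i, (-(ε * μ i * z i ^ 2))
        ≤ ∑ i, (-(ε * z i ^ 2 * ((1 / 2) * ∑ j ∈ univ.erase i, (a i j + a j i)))) := by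
      refine Finset.sum_le_sum fun i _ => ?_
      have h3 : 0 ≤ ε * z i ^ 2 := mul_nonneg hε.le (sq_nonneg _)
      nlinarith [mul_le_mul_of_nonneg_left (hμ i) h3]
    have hdiagE : ∑ i, ε * a i i * (z i * z i) = ∑ i, ε * a i i * z i ^ 2 :=
      Finset.sum_congr rfl fun i _ => by ring
    rw [splitE, hdiagE]
    have := le_trans hμterm hcross
    rw [Finset.sum_neg_distrib] at this
    linarith
  -- assemble the ε lower bound
  have hfinal : 2 * ε * (univ.inf' hne fun i => a i i) * ∑ i, z i ^ 2
      ≤ 2 * ∑ i, ε * a i i * z i ^ 2 := by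
    rw [Finset.mul_sum, Finset.mul_sum]
    refine Finset.sum_le_sum fun i _ => ?_
    have h1 : (univ.inf' hne fun i => a i i) ≤ a i i :=
      Finset.inf'_le _ (Finset.mem_univ i)
    nlinarith [mul_le_mul_of_nonneg_right h1 (sq_nonneg (z i)), hε.le]
  rw [ge_iff_le, hQtotal]
  linarith
end
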